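/- arXiv:2302.03278 — 7 statements merged into one kernel-verified Lean document; each statement's English description precedes it below -/
import Mathlib

section
/- Let G be a P_4-free graph on n vertices. Then the number of edges of G is at most n + (j² − 3j)/2, where j is the unique element of {0,1,2} with j ≡ n (mod 3). In particular, e(G) ≤ n if 3 divides n, and e(G) ≤ n − 1 otherwise. -/
open SimpleGraph

/-- `CopyIn H G` means `G` contains a subgraph isomorphic to `H`,
i.e. there is an injective graph homomorphism from `H` to `G`. -/
def CopyIn {α β : Type*} (H : SimpleGraph α) (G : SimpleGraph β) : Prop :=
  ∃ f : α ↪ β, ∀ a b, H.Adj a b → G.Adj (f a) (f b)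

/-- The Turán number `ex(n, H)`: the maximum number of edges in an
`H`-free graph on `n` vertices. -/
noncomputable def exNum {α : Type*} (n : ℕ) (H : SimpleGraph α) : ℕ :=
  sSup {m : ℕ | ∃ G : SimpleGraph (Fin n), ¬ CopyIn H G ∧ G.edgeSet.ncard = m}

/-- The odd prism `C_{2k+1} □ P_2`. -/
def oddPrism (k : ℕ) : SimpleGraph (Fin (2 * k + 1) × Fin 2) :=
  cycleGraph (2 * k + 1) □ pathGraph 2


set_option linter.unusedSectionVars false

section Aux
variable {n : ℕ} {G : SimpleGraph (Fin n)} [DecidableRel G.Adj]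

lemma noP4 (hfree : ¬ CopyIn (pathGraph 4) G) :
    ∀ a b c d : Fin n, G.Adj a b → G.Adj b c → G.Adj c d →
      a ≠ c → a ≠ d → b ≠ d → False := by
  intro a b c d hab hbc hcd hac had hbd
  apply hfree
  have hinj : Function.Injective ![a, b, c, d] := by
    have h1 := hab.ne; have h2 := hbc.ne; have h3 := hcd.ne
    intro i j hij
    fin_cases i <;> fin_cases j <;> simp_all
  refine ⟨⟨![a, b, c, d], hinj⟩, ?_⟩
  intro i j h
  rw [pathGraph_adj] at h
  fin_cases i <;> fin_cases j <;> simp_all <;>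
    first
    | exact hab | exact hbc | exact hcd
    | exact hab.symm | exact hbc.symm | exact hcd.symm


def spec (G : SimpleGraph (Fin n)) [DecidableRel G.Adj] (e : Sym2 (Fin n)) (x : Fin n) : Prop :=
  (x ∈ e ∧ G.degree x = 1) ∨ ((∀ y ∈ e, 2 ≤ G.degree y) ∧ ∀ y ∈ e, G.Adj x y)

open scoped Classical in
noncomputable def pick (G : SimpleGraph (Fin n)) [DecidableRel G.Adj]
    (e : Sym2 (Fin n)) : Fin n :=
  if h : ∃ x, spec G e x then h.choose else (Quot.out e).1

lemma pick_spec {e : Sym2 (Fin n)} (h : ∃ x, spec G e x) : spec G e (pick G e) := by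
  rw [pick]
  split
  · exact Exists.choose_spec _
  · exact absurd h (by assumption)

lemma deg_pos_of_adj {u v : Fin n} (h : G.Adj u v) : 1 ≤ G.degree u := by
  have h2 : v ∈ G.neighborFinset u := by simpa using h
  have h3 := Finset.card_pos.2 ⟨v, h2⟩
  rwa [card_neighborFinset_eq_degree] at h3

lemma exists_spec (hfree : ¬ CopyIn (pathGraph 4) G) {e : Sym2 (Fin n)}
    (he : e ∈ G.edgeSet) : ∃ x, spec G e x := by
  induction e with
  | _ u v =>
    have hadj : G.Adj u v := he
    by_cases hu : G.degree u = 1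
    · exact ⟨u, Or.inl ⟨by simp, hu⟩⟩
    by_cases hv : G.degree v = 1
    · exact ⟨v, Or.inl ⟨by simp, hv⟩⟩
    have hu2 : 2 ≤ G.degree u := by
      have := deg_pos_of_adj hadj; omega
    have hv2 : 2 ≤ G.degree v := by
      have := deg_pos_of_adj hadj.symm; omega
    have hdeg : ∀ y ∈ (s(u, v) : Sym2 (Fin n)), 2 ≤ G.degree y := by
      intro y hy; rw [Sym2.mem_iff] at hy; rcases hy with rfl | rfl <;> assumption
    -- get a neighbor c of u with c ≠ v
    obtain ⟨c, hc, hcv⟩ : ∃ c ∈ G.neighborFinset u, c ≠ v := by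
      have h1 : 1 < (G.neighborFinset u).card := by rwa [card_neighborFinset_eq_degree]
      exact Finset.exists_mem_ne h1 v
    rw [mem_neighborFinset] at hc
    by_cases hcv' : G.Adj c v
    · refine ⟨c, Or.inr ⟨hdeg, ?_⟩⟩
      intro y hy; rw [Sym2.mem_iff] at hy
      rcases hy with rfl | rfl
      · exact hc.symm
      · exact hcv'
    · obtain ⟨d, hd, hdu⟩ : ∃ d ∈ G.neighborFinset v, d ≠ u := by
        have h1 : 1 < (G.neighborFinset v).card := by rwa [card_neighborFinset_eq_degree]
        exact Finset.exists_mem_ne h1 u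
      rw [mem_neighborFinset] at hd
      have hcd : c ≠ d := by rintro rfl; exact hcv' hd.symm
      exact absurd (noP4 hfree c u v d hc.symm hadj hd hcv hcd hdu.symm) (fun h => h)


/-- rewrite an edge containing x as s(x,w) -/
lemma edge_eq {x : Fin n} {e : Sym2 (Fin n)} (he : e ∈ G.edgeSet) (hx : x ∈ e) :
    ∃ w, e = s(x, w) ∧ G.Adj x w := by
  induction e with
  | _ u v =>
    have hadj : G.Adj u v := he
    rw [Sym2.mem_iff] at hx
    rcases hx with rfl | rfl
    · exact ⟨v, rfl, hadj⟩
    · exact ⟨u, Sym2.eq_swap, hadj.symm⟩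

lemma unique_nbr {x w w' : Fin n} (hx : G.degree x = 1) (h1 : G.Adj x w) (h2 : G.Adj x w') :
    w = w' := by
  have hw : w ∈ G.neighborFinset x := by simpa using h1
  have hw' : w' ∈ G.neighborFinset x := by simpa using h2
  rw [← card_neighborFinset_eq_degree, Finset.card_eq_one] at hx
  obtain ⟨a, ha⟩ := hx
  rw [ha, Finset.mem_singleton] at hw hw'
  rw [hw, hw']

lemma two_le_deg_of_two_adj {x a b : Fin n} (hab : a ≠ b) (h1 : G.Adj x a) (h2 : G.Adj x b) :
    2 ≤ G.degree x := by
  rw [← card_neighborFinset_eq_degree]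
  apply Finset.one_lt_card.2
  exact ⟨a, by simpa using h1, b, by simpa using h2, hab⟩

lemma spec_unique (hfree : ¬ CopyIn (pathGraph 4) G) {u v a b x : Fin n}
    (h1 : G.Adj u v) (h2 : G.Adj a b)
    (hs1 : spec G s(u, v) x) (hs2 : spec G s(a, b) x) :
    (s(u, v) : Sym2 (Fin n)) = s(a, b) := by
  rcases hs1 with ⟨hx1, hdeg1⟩ | ⟨hd1, ha1⟩
  · rcases hs2 with ⟨hx2, _⟩ | ⟨_, ha2⟩
    · obtain ⟨w1, hw1, haw1⟩ := edge_eq (G.mem_edgeSet.2 h1) hx1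
      obtain ⟨w2, hw2, haw2⟩ := edge_eq (G.mem_edgeSet.2 h2) hx2
      rw [hw1, hw2, unique_nbr hdeg1 haw1 haw2]
    · have hxa : G.Adj x a := ha2 a (by simp)
      have hxb : G.Adj x b := ha2 b (by simp)
      have := two_le_deg_of_two_adj h2.ne hxa hxb
      omega
  · rcases hs2 with ⟨hx2, hdeg2⟩ | ⟨_, ha2⟩
    · have hxu : G.Adj x u := ha1 u (by simp)
      have hxv : G.Adj x v := ha1 v (by simp)
      have := two_le_deg_of_two_adj h1.ne hxu hxv
      omega
    · have hxu : G.Adj x u := ha1 u (by simp)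
      have hxv : G.Adj x v := ha1 v (by simp)
      have hxa : G.Adj x a := ha2 a (by simp)
      have hxb : G.Adj x b := ha2 b (by simp)
      by_contra hne
      have hkey : ∀ c : Fin n, G.Adj x c → c ≠ u → c ≠ v → False := by
        intro c hxc hcu hcv
        exact noP4 hfree c x u v hxc.symm hxu h1 hcu hcv hxv.ne
      by_cases hau : a = u
      · by_cases hbv : b = v
        · exact hne (by rw [hau, hbv])
        · exact hkey b hxb (fun h => h2.ne (hau ▸ h ▸ rfl)) hbv
      · by_cases hav : a = v
        · by_cases hbu : b = u
          · exact hne (by rw [hav, hbu, Sym2.eq_swap])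
          · exact hkey b hxb hbu (fun h => h2.ne (hav ▸ h ▸ rfl))
        · exact hkey a hxa hau hav

lemma spec_unique' (hfree : ¬ CopyIn (pathGraph 4) G) {e1 e2 : Sym2 (Fin n)} {x : Fin n}
    (he1 : e1 ∈ G.edgeSet) (he2 : e2 ∈ G.edgeSet)
    (hs1 : spec G e1 x) (hs2 : spec G e2 x) : e1 = e2 := by
  induction e1 with
  | _ u v =>
    induction e2 with
    | _ a b => exact spec_unique hfree he1 he2 hs1 hs2

lemma pick_injOn (hfree : ¬ CopyIn (pathGraph 4) G) : Set.InjOn (pick G) G.edgeSet := by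
  intro e1 he1 e2 he2 heq
  have s1 := pick_spec (exists_spec hfree he1)
  have s2 := pick_spec (exists_spec hfree he2)
  rw [heq] at s1
  exact spec_unique' hfree he1 he2 s1 s2

lemma card_le (hfree : ¬ CopyIn (pathGraph 4) G) : G.edgeSet.ncard ≤ n := by
  have h := Set.ncard_le_ncard_of_injOn (pick G) (fun e _ => Set.mem_univ (pick G e))
    (pick_injOn hfree) Set.finite_univ
  simpa [Set.ncard_univ] using h

lemma exists_avoided (hfree : ¬ CopyIn (pathGraph 4) G) (x0 : Fin n)
    (hx0 : G.degree x0 ≤ 1) : ∃ z, ∀ e ∈ G.edgeSet, pick G e ≠ z := by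
  by_cases h0 : G.degree x0 = 0
  · refine ⟨x0, fun e he hpe => ?_⟩
    have hs := pick_spec (exists_spec hfree he)
    rw [hpe] at hs
    rcases hs with ⟨_, hd⟩ | ⟨_, ha⟩
    · omega
    · induction e with
      | _ u v =>
        have := deg_pos_of_adj (ha u (by simp))
        omega
  · have h1 : G.degree x0 = 1 := by omega
    obtain ⟨y, hy⟩ : ∃ y, G.Adj x0 y := by
      have hpos : 0 < (G.neighborFinset x0).card := by
        rw [card_neighborFinset_eq_degree]; omega
      obtain ⟨y, hy⟩ := Finset.card_pos.1 hpos
      exact ⟨y, (mem_neighborFinset G x0 y).1 hy⟩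
    by_cases hdy : 2 ≤ G.degree y
    · refine ⟨y, fun e he hpe => ?_⟩
      have hs := pick_spec (exists_spec hfree he)
      rw [hpe] at hs
      rcases hs with ⟨_, hd⟩ | ⟨hd, ha⟩
      · omega
      · induction e with
        | _ u v =>
          have huv : G.Adj u v := he
          have hyu : G.Adj y u := ha u (by simp)
          have hyv : G.Adj y v := ha v (by simp)
          have hx0u : x0 ≠ u := by
            intro h; have h2 := hd u (by simp); rw [← h] at h2; omega
          have hx0v : x0 ≠ v := by
            intro h; have h2 := hd v (by simp); rw [← h] at h2; omega
          exact noP4 hfree x0 y u v hy hyu huv hx0u hx0v hyv.ne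
    · have hdy1 : G.degree y = 1 := by
        have := deg_pos_of_adj hy.symm; omega
      refine ⟨if pick G s(x0, y) = x0 then y else x0, fun e he hpe => ?_⟩
      by_cases hee : e = s(x0, y)
      · subst hee
        split_ifs at hpe with hif
        · exact G.ne_of_adj hy (hif.symm.trans hpe)
        · exact hif hpe
      · have hs := pick_spec (exists_spec hfree he)
        have hnot : pick G e ≠ x0 ∧ pick G e ≠ y := by
          rcases hs with ⟨hmem, hd⟩ | ⟨hd, ha⟩
          · constructor
            · intro hp
              rw [hp] at hmem hd
              obtain ⟨w, hw, haw⟩ := edge_eq he hmem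
              exact hee (by rw [hw, unique_nbr h1 haw hy])
            · intro hp
              rw [hp] at hmem hd
              obtain ⟨w, hw, haw⟩ := edge_eq he hmem
              have hwx : w = x0 := unique_nbr hdy1 haw hy.symm
              exact hee (by rw [hw, hwx, Sym2.eq_swap])
          · induction e with
            | _ u v =>
              have huv : G.Adj u v := he
              have h2 := two_le_deg_of_two_adj huv.ne (ha u (by simp)) (ha v (by simp))
              constructor
              · intro hp; rw [hp] at h2; omega
              · intro hp; rw [hp] at h2; omega
        split_ifs at hpe with hif
        · exact hnot.2 hpe
        · exact hnot.1 hpe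

lemma card_le_sub' (hfree : ¬ CopyIn (pathGraph 4) G) (x0 : Fin n)
    (hx0 : G.degree x0 ≤ 1) : G.edgeSet.ncard ≤ n - 1 := by
  obtain ⟨z, hz⟩ := exists_avoided hfree x0 hx0
  have h := Set.ncard_le_ncard_of_injOn (t := (Set.univ : Set (Fin n)) \ {z}) (pick G)
    (fun e he => ⟨Set.mem_univ _, fun hmem => hz e he (by simpa using hmem)⟩)
    (pick_injOn hfree) (Set.finite_univ.diff)
  have hcard : ((Set.univ : Set (Fin n)) \ {z}).ncard = n - 1 := by
    rw [Set.ncard_diff_singleton_of_mem (Set.mem_univ z), Set.ncard_univ]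
    simp
  rwa [hcard] at h

lemma three_dvd (hfree : ¬ CopyIn (pathGraph 4) G)
    (hmin : ∀ v : Fin n, 2 ≤ G.degree v) : 3 ∣ n := by
  classical
  have hkey : ∀ v a b x : Fin n, G.Adj v a → G.Adj v b → a ≠ b → G.Adj a x →
      x = v ∨ x = b := by
    intro v a b x hva hvb hab hax
    by_contra h
    push_neg at h
    exact noP4 hfree x a v b hax.symm hva.symm hvb h.1 h.2 hab
  have hnbr : ∀ v a b : Fin n, G.Adj v a → G.Adj v b → a ≠ b → G.Adj a b := by
    intro v a b hva hvb hab
    obtain ⟨c, hc, hcv⟩ : ∃ c ∈ G.neighborFinset a, c ≠ v := by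
      refine Finset.exists_mem_ne ?_ v
      rw [card_neighborFinset_eq_degree]
      have := hmin a; omega
    rw [mem_neighborFinset] at hc
    rcases hkey v a b c hva hvb hab hc with rfl | rfl
    · exact absurd rfl hcv
    · exact hc
  have hdeg2 : ∀ v : Fin n, G.degree v = 2 := by
    intro v
    by_contra h
    have h3 : 2 < (G.neighborFinset v).card := by
      rw [card_neighborFinset_eq_degree]
      have := hmin v; omega
    obtain ⟨a, ha, b, hb, hab⟩ :=
      Finset.one_lt_card.1 (show 1 < (G.neighborFinset v).card by omega)
    obtain ⟨c, hc, hcab⟩ : ∃ c ∈ G.neighborFinset v, c ∉ ({a, b} : Finset (Fin n)) := by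
      apply Finset.not_subset.1
      intro hsub
      have := Finset.card_le_card hsub
      have hcard : ({a, b} : Finset (Fin n)).card ≤ 2 := Finset.card_insert_le a {b} |>.trans (by simp)
      omega
    simp only [Finset.mem_insert, Finset.mem_singleton, not_or] at hcab
    rw [mem_neighborFinset] at ha hb hc
    obtain ⟨x, hx, hxv⟩ : ∃ x ∈ G.neighborFinset a, x ≠ v := by
      refine Finset.exists_mem_ne ?_ v
      rw [card_neighborFinset_eq_degree]
      have := hmin a; omega
    rw [mem_neighborFinset] at hx
    have h1 : x = b := by
      rcases hkey v a b x ha hb hab hx with rfl | rfl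
      · exact absurd rfl hxv
      · rfl
    have h2 : x = c := by
      rcases hkey v a c x ha hc (fun h => hcab.1 h.symm) hx with rfl | rfl
      · exact absurd rfl hxv
      · rfl
    exact hcab.2 (h1 ▸ h2.symm)
  -- every vertex's closed neighborhood is a triangle
  set t : Fin n → Finset (Fin n) := fun v => insert v (G.neighborFinset v) with ht
  have hcard3 : ∀ v, (t v).card = 3 := by
    intro v
    rw [ht]
    rw [Finset.card_insert_of_notMem (notMem_neighborFinset_self G v),
      card_neighborFinset_eq_degree, hdeg2]
  have hmemself : ∀ v, v ∈ t v := fun v => Finset.mem_insert_self v _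
  have hpair : ∀ v : Fin n, ∃ a b, G.Adj v a ∧ G.Adj v b ∧ a ≠ b ∧
      G.neighborFinset v = {a, b} := by
    intro v
    have h2 : (G.neighborFinset v).card = 2 := by
      rw [card_neighborFinset_eq_degree, hdeg2]
    obtain ⟨a, b, hab, hs⟩ := Finset.card_eq_two.1 h2
    have ha : a ∈ G.neighborFinset v := by rw [hs]; simp
    have hb : b ∈ G.neighborFinset v := by rw [hs]; simp
    rw [mem_neighborFinset] at ha hb
    exact ⟨a, b, ha, hb, hab, hs⟩
  have haux : ∀ v a b : Fin n, G.neighborFinset v = {a, b} → G.Adj v a → G.Adj v b →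
      a ≠ b → t a = t v := by
    intro v a b hs hva hvb hab
    have hadjab : G.Adj a b := hnbr v a b hva hvb hab
    have hnbra : G.neighborFinset a = {v, b} := by
      refine (Finset.eq_of_subset_of_card_le ?_ ?_).symm
      · intro x hx
        simp only [Finset.mem_insert, Finset.mem_singleton] at hx
        rcases hx with rfl | rfl
        · simpa using hva.symm
        · simpa using hadjab
      · rw [card_neighborFinset_eq_degree, hdeg2]
        have hvb' : v ∉ ({b} : Finset (Fin n)) := by simpa using hvb.ne
        rw [Finset.card_insert_of_notMem hvb', Finset.card_singleton]
    rw [ht]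
    simp only
    rw [hnbra, hs]
    ext x
    simp only [Finset.mem_insert, Finset.mem_singleton]
    tauto
  have hconst : ∀ v u : Fin n, u ∈ t v → t u = t v := by
    intro v u hu
    rw [ht] at hu
    simp only [Finset.mem_insert] at hu
    rcases hu with rfl | hu
    · rfl
    · rw [mem_neighborFinset] at hu
      obtain ⟨a, b, hva, hvb, hab, hs⟩ := hpair v
      have hu' : u = a ∨ u = b := by
        have : u ∈ G.neighborFinset v := (mem_neighborFinset G v u).2 hu
        rw [hs] at this; simpa using this
      rcases hu' with rfl | rfl
      · exact haux v u b hs hva hvb hab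
      · refine haux v u a ?_ hvb hva hab.symm
        rw [hs]; ext x; simp; tauto
  -- counting
  have hcount := Finset.card_eq_sum_card_fiberwise
    (f := t) (s := (Finset.univ : Finset (Fin n))) (t := Finset.univ.image t)
    (fun x _ => Finset.mem_image_of_mem t (Finset.mem_univ x))
  have hfib : ∀ s ∈ Finset.univ.image t,
      (Finset.univ.filter (fun u => t u = s)).card = 3 := by
    intro s hs
    obtain ⟨v, _, rfl⟩ := Finset.mem_image.1 hs
    have hset : Finset.univ.filter (fun u => t u = t v) = t v := by
      ext u
      simp only [Finset.mem_filter, Finset.mem_univ, true_and]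
      constructor
      · intro h; rw [← h]; exact hmemself u
      · exact hconst v u
    rw [hset, hcard3]
  rw [Finset.sum_congr rfl hfib, Finset.sum_const, smul_eq_mul] at hcount
  simp only [Finset.card_univ, Fintype.card_fin] at hcount
  exact ⟨(Finset.univ.image t).card, by omega⟩

end Aux

/-- A `P_4`-free graph on `n` vertices has at most
`n + (j² - 3j)/2` edges, where `j ∈ {0,1,2}` and `j ≡ n (mod 3)`; in particular at
most `n` edges when `3 ∣ n`, and at most `n - 1` edges otherwise. -/
theorem P4_free_edge_bound (n : ℕ) (G : SimpleGraph (Fin n))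
    (hfree : ¬ CopyIn (pathGraph 4) G) :
    (G.edgeSet.ncard : ℤ) ≤
        (n : ℤ) + (((n % 3 : ℕ) : ℤ) ^ 2 - 3 * ((n % 3 : ℕ) : ℤ)) / 2 ∧
      (3 ∣ n → G.edgeSet.ncard ≤ n) ∧
      (¬ 3 ∣ n → G.edgeSet.ncard ≤ n - 1) := by
  letI : DecidableRel G.Adj := fun a b => Classical.dec _
  have hle : G.edgeSet.ncard ≤ n := card_le hfree
  have hle2 : ¬ 3 ∣ n → G.edgeSet.ncard ≤ n - 1 := by
    intro h3
    by_cases hmin : ∀ v : Fin n, 2 ≤ G.degree v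
    · exact absurd (three_dvd hfree hmin) h3
    · push_neg at hmin
      obtain ⟨x0, hx0⟩ := hmin
      exact card_le_sub' hfree x0 (by omega)
  refine ⟨?_, fun _ => hle, hle2⟩
  by_cases h3 : 3 ∣ n
  · have hj : n % 3 = 0 := by omega
    rw [hj]
    norm_num
    exact_mod_cast hle
  · have hb := hle2 h3
    have hn1 : 1 ≤ n := by
      rcases Nat.eq_zero_or_pos n with rfl | h
      · exact absurd ⟨0, rfl⟩ h3
      · exact h
    have hj : n % 3 = 1 ∨ n % 3 = 2 := by omega
    have hcast : (G.edgeSet.ncard : ℤ) ≤ (n : ℤ) - 1 := by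
      have h' : (G.edgeSet.ncard : ℤ) ≤ ((n - 1 : ℕ) : ℤ) := by exact_mod_cast hb
      rwa [Nat.cast_sub hn1] at h'
    rcases hj with h | h <;> rw [h] <;> norm_num <;> linarith
end

section
/- Let t ≥ 1 and let G be a P_4-free graph on n = 3t vertices. Then G has at most 3t edges, and G has exactly 3t edges if and only if G is isomorphic to the disjoint union of t triangles. -/
open SimpleGraph

/-- The disjoint union of `t` triangles: the graph on `Fin t × Fin 3` in which two
distinct vertices are adjacent iff they lie in the same triangle. -/
def triangleUnion (t : ℕ) : SimpleGraph (Fin t × Fin 3) :=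
  SimpleGraph.fromRel (fun x y => x.1 = y.1)

/-! ### Auxiliary machinery -/

lemma noP4_s5 {V : Type*} {G : SimpleGraph V} (hfree : ¬ CopyIn (pathGraph 4) G) {a b c d : V}
    (hab : G.Adj a b) (hbc : G.Adj b c) (hcd : G.Adj c d)
    (hac : a ≠ c) (had : a ≠ d) (hbd : b ≠ d) : False := by
  apply hfree
  have h1 : a ≠ b := hab.ne
  have h2 : b ≠ c := hbc.ne
  have h3 : c ≠ d := hcd.ne
  refine ⟨⟨![a,b,c,d], ?_⟩, ?_⟩
  · intro i j hij
    fin_cases i <;> fin_cases j <;> simp_all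
  · intro i j hij
    rw [pathGraph_adj] at hij
    fin_cases i <;> fin_cases j <;> simp_all <;>
      first
      | exact hab | exact hab.symm | exact hbc | exact hbc.symm
      | exact hcd | exact hcd.symm

/-- `u v w` form a triangle that is a whole connected component. -/
def Tri {V : Type*} (G : SimpleGraph V) (u v w : V) : Prop :=
  G.Adj u v ∧ G.Adj v w ∧ G.Adj u w ∧
  (∀ z, G.Adj u z → z = v ∨ z = w) ∧ (∀ z, G.Adj v z → z = u ∨ z = w) ∧
  (∀ z, G.Adj w z → z = u ∨ z = v)

/-- `x` is a pendant vertex with unique neighbour `y`. -/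
def Pend {V : Type*} (G : SimpleGraph V) (x y : V) : Prop :=
  G.Adj x y ∧ ∀ z, G.Adj x z → z = y

lemma key {V : Type*} {G : SimpleGraph V} (hfree : ¬ CopyIn (pathGraph 4) G)
    {u v : V} (huv : G.Adj u v) :
    (∃ w, Tri G u v w) ∨ Pend G u v ∨ Pend G v u := by
  by_cases hu : ∀ z, G.Adj u z → z = v
  · exact Or.inr (Or.inl ⟨huv, hu⟩)
  by_cases hv : ∀ z, G.Adj v z → z = u
  · exact Or.inr (Or.inr ⟨huv.symm, hv⟩)
  push_neg at hu hv
  obtain ⟨w, huw, hwv⟩ := hu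
  obtain ⟨x, hvx, hxu⟩ := hv
  left
  have hwx : w = x := by
    by_contra h
    exact noP4_s5 hfree huw.symm huv hvx hwv h hxu.symm
  subst hwx
  refine ⟨w, huv, hvx, huw, ?_, ?_, ?_⟩
  · intro z hz
    by_contra h
    push_neg at h
    exact noP4_s5 hfree hz.symm huv hvx h.1 h.2 huw.ne
  · intro z hz
    by_contra h
    push_neg at h
    exact noP4_s5 hfree hz.symm huv.symm huw h.1 h.2 hvx.ne
  · intro z hz
    by_contra h
    push_neg at h
    exact noP4_s5 hfree hz.symm huw.symm huv h.1 h.2 hvx.ne.symm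

open Classical in
/-- The map sending each edge to a distinguished vertex: in a triangle component,
the third vertex of the triangle; for a pendant edge, the pendant endpoint. -/
noncomputable def fmap {V : Type*} (G : SimpleGraph V) : Sym2 V → V := fun e =>
  if h : ∃ w, ∃ u v, e = s(u, v) ∧ Tri G u v w then h.choose
  else if h2 : ∃ x y, e = s(x, y) ∧ Pend G x y then h2.choose
  else (Quot.out e).1

lemma fmap_spec {V : Type*} {G : SimpleGraph V} (hfree : ¬ CopyIn (pathGraph 4) G)
    {e : Sym2 V} (he : e ∈ G.edgeSet) :
    (∃ u v w, e = s(u, v) ∧ Tri G u v w ∧ fmap G e = w) ∨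
    (∃ x y, e = s(x, y) ∧ Pend G x y ∧ fmap G e = x) := by
  by_cases h : ∃ w, ∃ u v, e = s(u, v) ∧ Tri G u v w
  · obtain ⟨u, v, hev, htri⟩ := h.choose_spec
    exact Or.inl ⟨u, v, h.choose, hev, htri, by rw [fmap, dif_pos h]⟩
  · have h2 : ∃ x y, e = s(x, y) ∧ Pend G x y := by
      induction e using Sym2.ind with
      | _ u v =>
        rw [SimpleGraph.mem_edgeSet] at he
        rcases key hfree he with ⟨w, hw⟩ | hp | hp
        · exact absurd ⟨w, u, v, rfl, hw⟩ h
        · exact ⟨u, v, rfl, hp⟩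
        · exact ⟨v, u, Sym2.eq_swap, hp⟩
    obtain ⟨y, hev, hp⟩ := h2.choose_spec
    exact Or.inr ⟨h2.choose, y, hev, hp, by rw [fmap, dif_neg h, dif_pos h2]⟩

lemma fmap_injOn {V : Type*} {G : SimpleGraph V} (hfree : ¬ CopyIn (pathGraph 4) G) :
    Set.InjOn (fmap G) G.edgeSet := by
  intro e1 he1 e2 he2 heq
  rcases fmap_spec hfree he1 with ⟨u, v, w, hev, ht, hf⟩ | ⟨x, y, hev, hp, hf⟩ <;>
    rcases fmap_spec hfree he2 with ⟨u', v', w', hev', ht', hf'⟩ | ⟨x', y', hev', hp', hf'⟩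
  · -- both triangles
    have hww' : w = w' := by rw [← hf, ← hf', heq]
    subst hww'
    have hu' : u' = u ∨ u' = v := ht.2.2.2.2.2 u' ht'.2.2.1.symm
    have hv' : v' = u ∨ v' = v := ht.2.2.2.2.2 v' ht'.2.1.symm
    have huv' : u' ≠ v' := ht'.1.ne
    rw [hev, hev']
    rcases hu' with rfl | rfl <;> rcases hv' with h | h
    · exact absurd h huv'.symm
    · rw [h]
    · rw [h, Sym2.eq_swap]
    · exact absurd h huv'.symm
  · -- triangle / pendant
    exfalso
    have hxw : x' = w := by rw [← hf, ← hf', heq]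
    subst hxw
    have h1 : u = y' := hp'.2 u ht.2.2.1.symm
    have h2 : v = y' := hp'.2 v ht.2.1.symm
    exact ht.1.ne (h1.trans h2.symm)
  · -- pendant / triangle
    exfalso
    have hxw : x = w' := by rw [← hf, ← hf', heq]
    subst hxw
    have h1 : u' = y := hp.2 u' ht'.2.2.1.symm
    have h2 : v' = y := hp.2 v' ht'.2.1.symm
    exact ht'.1.ne (h1.trans h2.symm)
  · -- both pendants
    have hxx' : x = x' := by rw [← hf, ← hf', heq]
    subst hxx'
    have : y' = y := hp.2 y' (by rw [← SimpleGraph.mem_edgeSet, ← hev']; exact he2)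
    rw [hev, hev', this]

lemma triangleUnion_adj {t : ℕ} {x y : Fin t × Fin 3} :
    (triangleUnion t).Adj x y ↔ x ≠ y ∧ x.1 = y.1 := by
  rw [triangleUnion, SimpleGraph.fromRel_adj]
  constructor
  · rintro ⟨h1, h2 | h2⟩
    exacts [⟨h1, h2⟩, ⟨h1, h2.symm⟩]
  · rintro ⟨h1, h2⟩
    exact ⟨h1, Or.inl h2⟩

lemma triangleUnion_ncard (t : ℕ) : (triangleUnion t).edgeSet.ncard = 3 * t := by
  classical
  have hdeg : ∀ x, (triangleUnion t).degree x = 2 := by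
    intro x
    rw [← SimpleGraph.card_neighborSet_eq_degree]
    have e : (triangleUnion t).neighborSet x ≃ {j : Fin 3 // ¬ j = x.2} := by
      refine ⟨fun y => ⟨(y : Fin t × Fin 3).2, ?_⟩, fun j => ⟨(x.1, j.1), ?_⟩, ?_, ?_⟩
      · have hy := y.2
        rw [SimpleGraph.mem_neighborSet, triangleUnion_adj] at hy
        intro h
        exact hy.1 (Prod.ext hy.2 h.symm)
      · rw [SimpleGraph.mem_neighborSet, triangleUnion_adj]
        exact ⟨fun h => j.2 (congrArg Prod.snd h).symm, rfl⟩
      · intro y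
        have hy := y.2
        rw [SimpleGraph.mem_neighborSet, triangleUnion_adj] at hy
        exact Subtype.ext (Prod.ext hy.2 rfl)
      · intro j; rfl
    rw [Fintype.card_congr e, Fintype.card_subtype_compl, Fintype.card_subtype_eq,
      Fintype.card_fin]
  have hsum := (triangleUnion t).sum_degrees_eq_twice_card_edges
  simp only [hdeg, Finset.sum_const, Finset.card_univ, Fintype.card_prod,
    Fintype.card_fin, smul_eq_mul] at hsum
  have hcard : (triangleUnion t).edgeFinset.card = 3 * t := by omega
  rw [Set.ncard_eq_toFinset_card']
  exact hcard

/-- A `P_4`-free graph on `n = 3t` vertices (`t ≥ 1`) has at most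
`3t` edges, with equality iff it is the disjoint union of `t` triangles. -/
theorem P4_free_extremal_3t (t : ℕ) (ht : 1 ≤ t) (G : SimpleGraph (Fin (3 * t)))
    (hfree : ¬ CopyIn (pathGraph 4) G) :
    G.edgeSet.ncard ≤ 3 * t ∧
      (G.edgeSet.ncard = 3 * t ↔ Nonempty (G ≃g triangleUnion t)) := by
  classical
  have hinj := fmap_injOn hfree
  have himg : fmap G '' G.edgeSet ⊆ Set.univ := Set.subset_univ _
  have hcard_img : (fmap G '' G.edgeSet).ncard = G.edgeSet.ncard :=
    Set.ncard_image_of_injOn hinj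
  have huniv : (Set.univ : Set (Fin (3*t))).ncard = 3 * t := by
    rw [Set.ncard_univ, Nat.card_eq_fintype_card, Fintype.card_fin]
  have hle : G.edgeSet.ncard ≤ 3 * t :=
    calc G.edgeSet.ncard = (fmap G '' G.edgeSet).ncard := hcard_img.symm
      _ ≤ (Set.univ : Set (Fin (3*t))).ncard := Set.ncard_le_ncard himg Set.finite_univ
      _ = 3 * t := huniv
  refine ⟨hle, ?_, ?_⟩
  · -- equality implies union of triangles
    intro heq
    have himg_eq : fmap G '' G.edgeSet = Set.univ := by
      apply Set.eq_of_subset_of_ncard_le himg ?_ Set.finite_univ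
      rw [hcard_img, heq, huniv]
    have hall : ∀ x : Fin (3*t), ∃ e ∈ G.edgeSet, fmap G e = x := by
      intro x
      have hx : x ∈ fmap G '' G.edgeSet := himg_eq ▸ Set.mem_univ x
      obtain ⟨e, he, hfe⟩ := hx
      exact ⟨e, he, hfe⟩
    -- every vertex is the apex of a triangle component
    have htri : ∀ x, ∃ u v, Tri G u v x := by
      intro x
      obtain ⟨e1, he1, hf1⟩ := hall x
      rcases fmap_spec hfree he1 with ⟨u, v, w, hev, ht', hf⟩ | ⟨a, b, hev, hp0, hf⟩
      · have hwx : w = x := by rw [← hf, hf1]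
        exact ⟨u, v, hwx ▸ ht'⟩
      · exfalso
        have hax : a = x := by rw [← hf, hf1]
        have hp : Pend G x b := hax ▸ hp0
        have hevx : e1 = s(x, b) := hax ▸ hev
        obtain ⟨e2, he2, hf2⟩ := hall b
        rcases fmap_spec hfree he2 with ⟨u, v, w, hev', ht', hf'⟩ | ⟨a', b', hev', hp', hf'⟩
        · have hwb : w = b := by rw [← hf', hf2]
          have ht2 : Tri G u v b := hwb ▸ ht'
          rcases ht2.2.2.2.2.2 x hp.1.symm with hxu | hxv
          · have hv : v = b := hp.2 v (by rw [hxu]; exact ht2.1)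
            exact G.loopless.irrefl b (hv ▸ ht2.2.1)
          · have hu : u = b := hp.2 u (by rw [hxv]; exact ht2.1.symm)
            exact G.loopless.irrefl b (hu ▸ ht2.2.2.1)
        · have hab' : a' = b := by rw [← hf', hf2]
          have hp2 : Pend G b b' := hab' ▸ hp'
          have hxb' : x = b' := hp2.2 x hp.1.symm
          have he12 : e1 = e2 := by rw [hevx, hev', hab', hxb', Sym2.eq_swap]
          have hxb : x = b := by rw [← hf1, he12, hf2, ← hab']
          exact hp.1.ne hxb
    -- build the isomorphism with `t` disjoint triangles
    have hequiv : Equivalence (fun a b : Fin (3*t) => a = b ∨ G.Adj a b) := by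
      refine ⟨fun a => Or.inl rfl, fun h => h.imp Eq.symm SimpleGraph.Adj.symm, ?_⟩
      rintro a b c (rfl | hab) h2
      · exact h2
      rcases h2 with rfl | hbc
      · exact Or.inr hab
      obtain ⟨u, v, htb⟩ := htri b
      by_cases hac : a = c
      · exact Or.inl hac
      right
      rcases htb.2.2.2.2.2 a hab.symm with rfl | rfl <;>
        rcases htb.2.2.2.2.2 c hbc with h | h
      · exact absurd h.symm hac
      · exact h ▸ htb.1
      · exact h ▸ htb.1.symm
      · exact absurd h.symm hac
    let S : Setoid (Fin (3*t)) := ⟨fun a b => a = b ∨ G.Adj a b, hequiv⟩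
    have hSr : ∀ a b : Fin (3*t),
        (Quotient.mk S a = Quotient.mk S b) ↔ (a = b ∨ G.Adj a b) := by
      intro a b
      rw [Quotient.eq]
      rfl
    have hfib : ∀ q : Quotient S, Fintype.card {z // Quotient.mk S z = q} = 3 := by
      intro q
      obtain ⟨x, rfl⟩ := Quotient.exists_rep q
      obtain ⟨u, v, ht'⟩ := htri x
      have hmem : ∀ z, Quotient.mk S z = Quotient.mk S x ↔ z ∈ ({u, v, x} : Finset _) := by
        intro z
        rw [hSr]
        constructor
        · rintro (rfl | hz)
          · simp
          · rcases ht'.2.2.2.2.2 z hz.symm with rfl | rfl <;> simp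
        · intro hz
          simp only [Finset.mem_insert, Finset.mem_singleton] at hz
          rcases hz with rfl | rfl | rfl
          · exact Or.inr ht'.2.2.1
          · exact Or.inr ht'.2.1
          · exact Or.inl rfl
      rw [Fintype.card_subtype]
      have hflt : Finset.univ.filter
          (fun z => Quotient.mk S z = Quotient.mk S x) = {u, v, x} := by
        ext z
        rw [Finset.mem_filter]
        simp only [Finset.mem_univ, true_and]
        exact hmem z
      rw [hflt, Finset.card_insert_of_notMem, Finset.card_insert_of_notMem,
        Finset.card_singleton]
      · simp [ht'.2.1.ne]
      · simp [ht'.1.ne, ht'.2.2.1.ne]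
    have hQ : Fintype.card (Quotient S) = t := by
      have h1 : Fintype.card (Σ q : Quotient S, {z // Quotient.mk S z = q})
          = Fintype.card (Fin (3*t)) :=
        Fintype.card_congr (Equiv.sigmaFiberEquiv (Quotient.mk S))
      rw [Fintype.card_sigma] at h1
      simp only [hfib, Finset.sum_const, Finset.card_univ, smul_eq_mul,
        Fintype.card_fin] at h1
      omega
    let eQ : Quotient S ≃ Fin t := Fintype.equivFinOfCardEq hQ
    let eF : ∀ q : Quotient S, {z // Quotient.mk S z = q} ≃ Fin 3 :=
      fun q => Fintype.equivFinOfCardEq (hfib q)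
    let e : Fin (3*t) ≃ Fin t × Fin 3 :=
      (Equiv.sigmaFiberEquiv (Quotient.mk S)).symm.trans
        ((Equiv.sigmaCongrRight eF).trans
          ((Equiv.sigmaEquivProd (Quotient S) (Fin 3)).trans
            (Equiv.prodCongr eQ (Equiv.refl (Fin 3)))))
    have he1 : ∀ z, (e z).1 = eQ (Quotient.mk S z) := fun z => rfl
    refine ⟨⟨e, ?_⟩⟩
    intro a b
    rw [triangleUnion_adj]
    constructor
    · rintro ⟨hne, hfst⟩
      have hq : Quotient.mk S a = Quotient.mk S b :=
        eQ.injective (by rw [← he1, ← he1]; exact hfst)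
      rcases (hSr a b).mp hq with rfl | h
      · exact absurd rfl hne
      · exact h
    · intro h
      refine ⟨fun hc => h.ne (e.injective hc), ?_⟩
      rw [he1, he1]
      exact congrArg eQ ((hSr a b).mpr (Or.inr h))
  · -- union of triangles has exactly 3t edges
    rintro ⟨iso⟩
    calc G.edgeSet.ncard = (triangleUnion t).edgeSet.ncard := by
          rw [← Nat.card_coe_set_eq, ← Nat.card_coe_set_eq]
          exact Nat.card_congr iso.mapEdgeSet
      _ = 3 * t := triangleUnion_ncard t
end

section
/- Let t ≥ 1 and let G be a P_4-free graph on n = 3t + 1 vertices. Then G has at most 3t edges, and G has exactly 3t edges if and only if G is isomorphic either to the disjoint union of t triangles and one isolated vertex, or, for some integer ℓ with 0 ≤ ℓ ≤ t−1, to the disjoint union of (t−ℓ−1) triangles and the star K_{1,3ℓ+3}. -/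
set_option linter.unusedSectionVars false
set_option maxHeartbeats 1000000

open SimpleGraph

/-- The star `K_{1,m}`: vertex `0` is the center, joined to the `m` leaves. -/
def starGraphK (m : ℕ) : SimpleGraph (Fin (m + 1)) :=
  SimpleGraph.fromRel (fun i _ => i = 0)

section
variable {n : ℕ} {G : SimpleGraph (Fin n)} [DecidableRel G.Adj]

lemma no_path (hfree : ¬ CopyIn (pathGraph 4) G) {a b c d : Fin n}
    (hab : G.Adj a b) (hbc : G.Adj b c) (hcd : G.Adj c d)
    (hac : a ≠ c) (hbd : b ≠ d) (had : a ≠ d) : False := by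
  have h1 := hab.ne; have h2 := hbc.ne; have h3 := hcd.ne
  apply hfree
  refine ⟨⟨![a,b,c,d], ?_⟩, ?_⟩
  · intro i j hij
    fin_cases i <;> fin_cases j <;> simp_all
  · intro i j hij
    change G.Adj (![a,b,c,d] i) (![a,b,c,d] j)
    rw [pathGraph_adj] at hij
    fin_cases i <;> fin_cases j <;> simp_all [G.adj_comm]

lemma pair_eq {x y a b : Fin n} (h : ({x, y} : Finset (Fin n)) = {a, b}) (hxy : x ≠ y) :
    s(x, y) = s(a, b) := by
  have hx : x ∈ ({a, b} : Finset (Fin n)) := h ▸ Finset.mem_insert_self x {y}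
  have hy : y ∈ ({a, b} : Finset (Fin n)) := h ▸ (by simp : y ∈ ({x, y} : Finset (Fin n)))
  simp only [Finset.mem_insert, Finset.mem_singleton] at hx hy
  rcases hx with rfl | rfl <;> rcases hy with rfl | rfl <;> first
    | exact absurd rfl hxy
    | rw [Sym2.eq_swap]
    | rfl

lemma mem_pair_ne {x a b : Fin n} (h : x ∈ ({a, b} : Finset (Fin n))) : x = a ∨ x = b := by
  simpa using h

/-- the two other vertices of a triangle vertex are triangle vertices -/
lemma tri_struct (hfree : ¬ CopyIn (pathGraph 4) G) {v a b : Fin n}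
    (hv : G.neighborFinset v = {a, b}) (hab : G.Adj a b) :
    G.neighborFinset a = {v, b} ∧ G.neighborFinset b = {v, a} := by
  have hva : G.Adj v a := by
    rw [← SimpleGraph.mem_neighborFinset, hv]; simp
  have hvb : G.Adj v b := by
    rw [← SimpleGraph.mem_neighborFinset, hv]; simp
  constructor
  · apply Finset.Subset.antisymm
    · intro x hx
      rw [SimpleGraph.mem_neighborFinset] at hx
      by_contra hmem
      simp only [Finset.mem_insert, Finset.mem_singleton, not_or] at hmem
      exact no_path hfree hx.symm hab hvb.symm hmem.2 hva.ne' hmem.1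
    · intro x hx
      rcases mem_pair_ne hx with rfl | rfl <;> rw [SimpleGraph.mem_neighborFinset]
      · exact hva.symm
      · exact hab
  · apply Finset.Subset.antisymm
    · intro x hx
      rw [SimpleGraph.mem_neighborFinset] at hx
      by_contra hmem
      simp only [Finset.mem_insert, Finset.mem_singleton, not_or] at hmem
      exact no_path hfree hx.symm hab.symm hva.symm hmem.2 hvb.ne' hmem.1
    · intro x hx
      rcases mem_pair_ne hx with rfl | rfl <;> rw [SimpleGraph.mem_neighborFinset]
      · exact hvb.symm
      · exact hab.symm

/-- if both endpoints of an edge have degree ≠ 1 they lie in a triangle -/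
lemma exists_third (hfree : ¬ CopyIn (pathGraph 4) G) {a b : Fin n}
    (hab : G.Adj a b) (ha : G.degree a ≠ 1) (hb : G.degree b ≠ 1) :
    ∃ c, G.neighborFinset c = {a, b} := by
  have hba : b ∈ G.neighborFinset a := by rwa [SimpleGraph.mem_neighborFinset]
  have hab' : a ∈ G.neighborFinset b := by rw [SimpleGraph.mem_neighborFinset]; exact hab.symm
  have ha2 : 1 < (G.neighborFinset a).card := by
    rcases Nat.lt_or_ge (G.neighborFinset a).card 2 with h | h
    · interval_cases h' : (G.neighborFinset a).card
      · exact absurd (Finset.card_eq_zero.mp h') (by intro hh; rw [hh] at hba; simp at hba)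
      · exact absurd h' ha
    · omega
  have hb2 : 1 < (G.neighborFinset b).card := by
    rcases Nat.lt_or_ge (G.neighborFinset b).card 2 with h | h
    · interval_cases h' : (G.neighborFinset b).card
      · exact absurd (Finset.card_eq_zero.mp h') (by intro hh; rw [hh] at hab'; simp at hab')
      · exact absurd h' hb
    · omega
  obtain ⟨c, hc, hcb⟩ := Finset.exists_mem_ne ha2 b
  obtain ⟨d, hd, hda⟩ := Finset.exists_mem_ne hb2 a
  rw [SimpleGraph.mem_neighborFinset] at hc hd
  have hcd : c = d := by
    by_contra hne
    exact no_path hfree hc.symm hab hd hcb (Ne.symm hda) hne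
  subst hcd
  refine ⟨c, Finset.Subset.antisymm ?_ ?_⟩
  · intro x hx
    rw [SimpleGraph.mem_neighborFinset] at hx
    by_contra hmem
    simp only [Finset.mem_insert, Finset.mem_singleton, not_or] at hmem
    exact no_path hfree hx.symm hc.symm hab hmem.1 hcb hmem.2
  · intro x hx
    rcases mem_pair_ne hx with rfl | rfl <;> rw [SimpleGraph.mem_neighborFinset]
    · exact hc.symm
    · exact hd.symm

variable (G)

def TriVert (v : Fin n) : Prop :=
  ∃ x y, G.Adj x y ∧ G.neighborFinset v = {x, y}

noncomputable def gmap (v : Fin n) : Option (Sym2 (Fin n)) :=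
  if h : (G.neighborFinset v).card = 1 then
    if (G.neighborFinset (Finset.card_eq_one.mp h).choose).card = 1 ∧
        v < (Finset.card_eq_one.mp h).choose then none
    else some s(v, (Finset.card_eq_one.mp h).choose)
  else if h2 : ∃ p : Fin n × Fin n, G.Adj p.1 p.2 ∧ G.neighborFinset v = {p.1, p.2} then
    some s(h2.choose.1, h2.choose.2)
  else none

variable {G}

lemma gmap_deg1 {v w : Fin n} (hw : G.neighborFinset v = {w}) :
    gmap G v = if (G.neighborFinset w).card = 1 ∧ v < w then none else some s(v, w) := by
  have h : (G.neighborFinset v).card = 1 := by rw [hw]; simp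
  have hsp := (Finset.card_eq_one.mp h).choose_spec
  have hcw : (Finset.card_eq_one.mp h).choose = w := by
    have := hsp.symm.trans hw
    exact Finset.singleton_injective this
  subst hcw
  rw [gmap, dif_pos h]

lemma gmap_tri {v x y : Fin n} (hxy : G.Adj x y) (hv : G.neighborFinset v = {x, y}) :
    gmap G v = some s(x, y) := by
  have h1 : (G.neighborFinset v).card ≠ 1 := by
    rw [hv, Finset.card_insert_of_notMem (by simp [hxy.ne]), Finset.card_singleton]
    omega
  have h2 : ∃ p : Fin n × Fin n, G.Adj p.1 p.2 ∧ G.neighborFinset v = {p.1, p.2} :=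
    ⟨(x, y), hxy, hv⟩
  rw [gmap, dif_neg h1, dif_pos h2]
  have hsp := h2.choose_spec
  have := hsp.2.symm.trans hv
  exact congrArg some (pair_eq this hsp.1.ne)

lemma gmap_inv {v : Fin n} {e : Sym2 (Fin n)} (h : gmap G v = some e) :
    ((G.neighborFinset v).card = 1 ∧ ∃ w, G.neighborFinset v = {w} ∧
      ¬((G.neighborFinset w).card = 1 ∧ v < w) ∧ e = s(v, w)) ∨
    (∃ x y, G.Adj x y ∧ G.neighborFinset v = {x, y} ∧ e = s(x, y)) := by
  rw [gmap] at h
  split_ifs at h with h1 hc h2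
  · exact Or.inl ⟨h1, (Finset.card_eq_one.mp h1).choose, (Finset.card_eq_one.mp h1).choose_spec,
      hc, (Option.some_injective _ h).symm⟩
  · exact Or.inr ⟨h2.choose.1, h2.choose.2, h2.choose_spec.1, h2.choose_spec.2,
      (Option.some_injective _ h).symm⟩


lemma adj_of_mem_nf {v x : Fin n} {s : Finset (Fin n)} (hv : G.neighborFinset v = s)
    (hx : x ∈ s) : G.Adj v x := by
  rw [← SimpleGraph.mem_neighborFinset, hv]; exact hx

lemma nf_eq_singleton {a b : Fin n} (hab : G.Adj a b)
    (ha : (G.neighborFinset a).card = 1) : G.neighborFinset a = {b} := by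
  obtain ⟨w, hw⟩ := Finset.card_eq_one.mp ha
  have hb : b ∈ G.neighborFinset a := by rwa [SimpleGraph.mem_neighborFinset]
  rw [hw] at hb ⊢
  simp only [Finset.mem_singleton] at hb
  rw [hb]

lemma pair_card {x y : Fin n} (hxy : x ≠ y) : ({x, y} : Finset (Fin n)).card = 2 := by
  rw [Finset.card_insert_of_notMem (by simp [hxy]), Finset.card_singleton]

lemma tri_endpoints_deg (hfree : ¬ CopyIn (pathGraph 4) G) {w x y : Fin n}
    (hxy : G.Adj x y) (hw : G.neighborFinset w = {x, y}) :
    (G.neighborFinset x).card = 2 ∧ (G.neighborFinset y).card = 2 ∧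
      G.neighborFinset x = {w, y} ∧ G.neighborFinset y = {w, x} := by
  obtain ⟨h1, h2⟩ := tri_struct hfree hw hxy
  have hwy : w ≠ y := (adj_of_mem_nf hw (by simp)).ne
  have hwx : w ≠ x := (adj_of_mem_nf hw (by simp)).ne
  refine ⟨?_, ?_, h1, h2⟩
  · rw [h1]; exact pair_card hwy
  · rw [h2]; exact pair_card hwx

lemma gmap_surj (hfree : ¬ CopyIn (pathGraph 4) G) {a b : Fin n} (hab : G.Adj a b) :
    ∃ v, gmap G v = some s(a, b) := by
  by_cases ha : (G.neighborFinset a).card = 1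
  · have hNa := nf_eq_singleton hab ha
    by_cases hb : (G.neighborFinset b).card = 1
    · have hNb := nf_eq_singleton hab.symm hb
      rcases lt_trichotomy a b with h | h | h
      · refine ⟨b, ?_⟩
        rw [gmap_deg1 hNb, if_neg (fun hc => absurd hc.2 (not_lt.mpr h.le)), Sym2.eq_swap]
      · exact absurd h hab.ne
      · refine ⟨a, ?_⟩
        rw [gmap_deg1 hNa, if_neg (fun hc => absurd hc.2 (not_lt.mpr h.le))]
    · refine ⟨a, ?_⟩
      rw [gmap_deg1 hNa, if_neg (fun hc => hb hc.1)]
  · by_cases hb : (G.neighborFinset b).card = 1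
    · have hNb := nf_eq_singleton hab.symm hb
      refine ⟨b, ?_⟩
      rw [gmap_deg1 hNb, if_neg (fun hc => ha hc.1), Sym2.eq_swap]
    · obtain ⟨c, hc⟩ := exists_third hfree hab ha hb
      exact ⟨c, gmap_tri hab hc⟩

lemma gmap_inj (hfree : ¬ CopyIn (pathGraph 4) G) {v w : Fin n} {e : Sym2 (Fin n)}
    (hv : gmap G v = some e) (hw : gmap G w = some e) : v = w := by
  rcases gmap_inv hv with ⟨hv1, a, hva, hvc, rfl⟩ | ⟨x, y, hxy, hvt, rfl⟩
  · rcases gmap_inv hw with ⟨hw1, b, hwb, hwc, he⟩ | ⟨x, y, hxy, hwt, he⟩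
    · rw [Sym2.eq_iff] at he
      rcases he with ⟨rfl, rfl⟩ | ⟨rfl, rfl⟩
      · rfl
      · -- v = b, a = w : N v = {w}, N w = {v}, neither v < w nor w < v
        push_neg at hvc hwc
        exact le_antisymm (hwc hv1) (hvc hw1)
    · -- e = s(v,a) = s(x,y), v has deg 1 but x and y have deg 2
      obtain ⟨hx2, hy2, _, _⟩ := tri_endpoints_deg hfree hxy hwt
      rw [Sym2.eq_iff] at he
      rcases he with ⟨rfl, rfl⟩ | ⟨rfl, rfl⟩
      · rw [hv1] at hx2; omega
      · rw [hv1] at hy2; omega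
  · rcases gmap_inv hw with ⟨hw1, b, hwb, hwc, he⟩ | ⟨x', y', hxy', hwt, he⟩
    · obtain ⟨hx2, hy2, _, _⟩ := tri_endpoints_deg hfree hxy hvt
      rw [Sym2.eq_iff] at he
      rcases he with ⟨rfl, rfl⟩ | ⟨rfl, rfl⟩
      · rw [hw1] at hx2; omega
      · rw [hw1] at hy2; omega
    · obtain ⟨_, _, hNx, hNy⟩ := tri_endpoints_deg hfree hxy hvt
      obtain ⟨_, _, hNx', hNy'⟩ := tri_endpoints_deg hfree hxy' hwt
      have hvy : v ≠ y := (adj_of_mem_nf hvt (by simp)).ne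
      rw [Sym2.eq_iff] at he
      rcases he with ⟨h1, h2⟩ | ⟨h1, h2⟩
      · subst h1; subst h2
        have : ({v, y} : Finset (Fin n)) = {w, y} := hNx.symm.trans hNx'
        have hv' : v ∈ ({w, y} : Finset (Fin n)) := this ▸ (by simp)
        rcases mem_pair_ne hv' with h | h
        · exact h
        · exact absurd h hvy
      · subst h1; subst h2
        have : ({v, y} : Finset (Fin n)) = {w, y} := hNx.symm.trans hNy'
        have hv' : v ∈ ({w, y} : Finset (Fin n)) := this ▸ (by simp)
        rcases mem_pair_ne hv' with h | h
        · exact h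
        · exact absurd h hvy


def triSet (G : SimpleGraph (Fin n)) [DecidableRel G.Adj] (v : Fin n) : Finset (Fin n) :=
  insert v (G.neighborFinset v)

lemma mem_triSet_self (v : Fin n) : v ∈ triSet G v := Finset.mem_insert_self _ _

lemma triSet_card {v : Fin n} (hv : TriVert G v) : (triSet G v).card = 3 := by
  obtain ⟨x, y, hxy, hN⟩ := hv
  have hvx : v ≠ x := (adj_of_mem_nf hN (by simp)).ne
  have hvy : v ≠ y := (adj_of_mem_nf hN (by simp)).ne
  rw [triSet, hN, Finset.card_insert_of_notMem (by simp [hvx, hvy]), pair_card hxy.ne]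

lemma triVert_of_mem (hfree : ¬ CopyIn (pathGraph 4) G) {v u : Fin n}
    (hv : TriVert G v) (hu : u ∈ triSet G v) : TriVert G u := by
  obtain ⟨x, y, hxy, hN⟩ := hv
  have hvx : G.Adj v x := adj_of_mem_nf hN (by simp)
  have hvy : G.Adj v y := adj_of_mem_nf hN (by simp)
  obtain ⟨_, _, hNx, hNy⟩ := tri_endpoints_deg hfree hxy hN
  rw [triSet, Finset.mem_insert, hN] at hu
  rcases hu with rfl | hu
  · exact ⟨x, y, hxy, hN⟩
  · rcases mem_pair_ne hu with rfl | rfl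
    · exact ⟨v, y, hvy, hNx⟩
    · exact ⟨v, x, hvx, hNy⟩

lemma triSet_eq (hfree : ¬ CopyIn (pathGraph 4) G) {v u : Fin n}
    (hv : TriVert G v) (hu : u ∈ triSet G v) : triSet G u = triSet G v := by
  obtain ⟨x, y, hxy, hN⟩ := hv
  obtain ⟨_, _, hNx, hNy⟩ := tri_endpoints_deg hfree hxy hN
  rw [triSet, Finset.mem_insert, hN] at hu
  rcases hu with rfl | hu
  · rfl
  · rcases mem_pair_ne hu with rfl | rfl <;>
      · rw [triSet, triSet, hN] <;> first
          | (rw [hNx]; ext z; simp; tauto)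
          | (rw [hNy]; ext z; simp; tauto)

lemma partition_card (C : Finset (Fin n)) (f : Fin n → Finset (Fin n))
    (hmem : ∀ v ∈ C, v ∈ f v) (hsub : ∀ v ∈ C, f v ⊆ C)
    (hcard : ∀ v ∈ C, (f v).card = 3)
    (heq : ∀ v ∈ C, ∀ u ∈ f v, f u = f v) :
    C.card = 3 * (C.image f).card := by
  have hC : C = (C.image f).biUnion id := by
    ext u
    simp only [Finset.mem_biUnion, Finset.mem_image, id]
    constructor
    · intro hu; exact ⟨f u, ⟨u, hu, rfl⟩, hmem u hu⟩
    · rintro ⟨s, ⟨v, hv, rfl⟩, hus⟩; exact hsub v hv hus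
  have hdisj : ∀ s ∈ C.image f, ∀ t ∈ C.image f, s ≠ t → Disjoint (id s) (id t) := by
    rintro s hs t ht hst
    obtain ⟨v, hv, rfl⟩ := Finset.mem_image.mp hs
    obtain ⟨w, hw, rfl⟩ := Finset.mem_image.mp ht
    rw [Finset.disjoint_left]
    intro u hus hut
    exact hst ((heq v hv u hus).symm.trans (heq w hw u hut))
  calc C.card = ((C.image f).biUnion id).card := by conv_lhs => rw [hC]
    _ = ∑ s ∈ C.image f, (id s).card := Finset.card_biUnion hdisj
    _ = ∑ s ∈ C.image f, 3 := by
        refine Finset.sum_congr rfl fun s hs => ?_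
        obtain ⟨v, hv, rfl⟩ := Finset.mem_image.mp hs
        exact hcard v hv
    _ = 3 * (C.image f).card := by rw [Finset.sum_const, smul_eq_mul, mul_comm]

lemma partition_equiv (C : Finset (Fin n)) (f : Fin n → Finset (Fin n)) (k : ℕ)
    (hmem : ∀ v ∈ C, v ∈ f v) (hsub : ∀ v ∈ C, f v ⊆ C)
    (hcard : ∀ v ∈ C, (f v).card = 3)
    (heq : ∀ v ∈ C, ∀ u ∈ f v, f u = f v)
    (hk : C.card = 3 * k) :
    ∃ φ : {x : Fin n // x ∈ C} ≃ (Fin k × Fin 3),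
      ∀ v w : {x : Fin n // x ∈ C}, ((φ v).1 = (φ w).1 ↔ f v.1 = f w.1) := by
  have hpk : (C.image f).card = k := by
    have := partition_card C f hmem hsub hcard heq; omega
  let e1 : {s // s ∈ C.image f} ≃ Fin k :=
    Fintype.equivFinOfCardEq (by rw [Fintype.card_coe, hpk])
  have hfm : ∀ v : {x : Fin n // x ∈ C}, f v.1 ∈ C.image f :=
    fun v => Finset.mem_image_of_mem f v.2
  have hidx : ∀ v : {x : Fin n // x ∈ C},
      ((f v.1).sort (· ≤ ·)).idxOf v.1 < 3 := by
    intro v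
    have h1 : v.1 ∈ (f v.1).sort (· ≤ ·) := (Finset.mem_sort (α := Fin n) (· ≤ ·)).mpr (hmem v.1 v.2)
    have h2 := List.idxOf_lt_length_iff.mpr h1
    rwa [Finset.length_sort, hcard v.1 v.2] at h2
  let φ0 : {x : Fin n // x ∈ C} → Fin k × Fin 3 :=
    fun v => (e1 ⟨f v.1, hfm v⟩, ⟨((f v.1).sort (· ≤ ·)).idxOf v.1, hidx v⟩)
  have hfst : ∀ v w : {x : Fin n // x ∈ C}, ((φ0 v).1 = (φ0 w).1 ↔ f v.1 = f w.1) := by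
    intro v w
    constructor
    · intro h
      have := e1.injective h
      exact Subtype.ext_iff.mp this
    · intro h
      show e1 ⟨f v.1, hfm v⟩ = e1 ⟨f w.1, hfm w⟩
      congr 1
      exact Subtype.ext h
  have hinj : Function.Injective φ0 := by
    intro v w h
    have h1 : f v.1 = f w.1 := (hfst v w).mp (congrArg Prod.fst h)
    have h2 : ((f v.1).sort (· ≤ ·)).idxOf v.1 = ((f v.1).sort (· ≤ ·)).idxOf w.1 := by
      have := congrArg Prod.snd h
      simp only [φ0] at this
      rw [Fin.mk.injEq] at this
      rw [this, h1]
    have hv1 : v.1 ∈ (f v.1).sort (· ≤ ·) := (Finset.mem_sort (α := Fin n) (· ≤ ·)).mpr (hmem v.1 v.2)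
    have hw1 : w.1 ∈ (f v.1).sort (· ≤ ·) := by
      rw [h1]; exact (Finset.mem_sort (α := Fin n) (· ≤ ·)).mpr (hmem w.1 w.2)
    exact Subtype.ext ((List.idxOf_inj hv1).mp h2)
  have hbij : Function.Bijective φ0 := by
    rw [Fintype.bijective_iff_injective_and_card]
    refine ⟨hinj, ?_⟩
    rw [Fintype.card_coe, hk, Fintype.card_prod, Fintype.card_fin, Fintype.card_fin, mul_comm]
  exact ⟨Equiv.ofBijective φ0 hbij, hfst⟩

lemma star_equiv (L : Finset (Fin n)) (c0 : Fin n) (hc0 : c0 ∉ L) (M : ℕ)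
    (hM : L.card = M) :
    ∃ χ : {x : Fin n // x ∈ insert c0 L} ≃ Fin (M + 1),
      ∀ v : {x : Fin n // x ∈ insert c0 L}, (χ v = 0 ↔ v.1 = c0) := by
  have hidx : ∀ v : {x : Fin n // x ∈ insert c0 L}, v.1 ≠ c0 →
      (L.sort (· ≤ ·)).idxOf v.1 < M := by
    intro v hv
    have h1 : v.1 ∈ L := by
      rcases Finset.mem_insert.mp v.2 with h | h
      · exact absurd h hv
      · exact h
    have h2 := List.idxOf_lt_length_iff.mpr ((Finset.mem_sort (α := Fin n) (· ≤ ·)).mpr h1)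
    rwa [Finset.length_sort, hM] at h2
  let χ0 : {x : Fin n // x ∈ insert c0 L} → Fin (M + 1) :=
    fun v => if h : v.1 = c0 then 0 else ⟨(L.sort (· ≤ ·)).idxOf v.1 + 1, by
      have := hidx v h; omega⟩
  have hprop : ∀ v, (χ0 v = 0 ↔ v.1 = c0) := by
    intro v
    by_cases h : v.1 = c0
    · simp [χ0, h]
    · simp only [χ0, dif_neg h]
      constructor
      · intro hcon
        have := congrArg Fin.val hcon
        simp at this
      · intro hcon; exact absurd hcon h
  have hinj : Function.Injective χ0 := by
    intro v w h
    by_cases hv : v.1 = c0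
    · have : χ0 w = 0 := by rw [← h, (hprop v).mpr hv]
      exact Subtype.ext (hv.trans ((hprop w).mp this).symm)
    · by_cases hw : w.1 = c0
      · have : χ0 v = 0 := by rw [h, (hprop w).mpr hw]
        exact absurd ((hprop v).mp this) hv
      · simp only [χ0, dif_neg hv, dif_neg hw, Fin.mk.injEq] at h
        have h1 : v.1 ∈ L := by
          rcases Finset.mem_insert.mp v.2 with hh | hh
          · exact absurd hh hv
          · exact hh
        have h2 : w.1 ∈ L := by
          rcases Finset.mem_insert.mp w.2 with hh | hh
          · exact absurd hh hw
          · exact hh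
        refine Subtype.ext ((List.idxOf_inj ((Finset.mem_sort (α := Fin n) (· ≤ ·)).mpr h1)).mp ?_)
        omega
  have hbij : Function.Bijective χ0 := by
    rw [Fintype.bijective_iff_injective_and_card]
    refine ⟨hinj, ?_⟩
    rw [Fintype.card_coe, Finset.card_insert_of_notMem hc0, hM, Fintype.card_fin]
  exact ⟨Equiv.ofBijective χ0 hbij, hprop⟩


end


section counting

lemma ncard_eq_of_iso {V W : Type*} {G : SimpleGraph V} {H : SimpleGraph W} (e : G ≃g H) :
    G.edgeSet.ncard = H.edgeSet.ncard := by
  have h := Nat.card_congr e.mapEdgeSet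
  rwa [Nat.card_coe_set_eq, Nat.card_coe_set_eq] at h

lemma sum_nf_inl {α β : Type*} [Fintype α] [Fintype β] [DecidableEq α] [DecidableEq β]
    (G : SimpleGraph α) (H : SimpleGraph β) [DecidableRel G.Adj]
    (a : α) [Fintype ((G ⊕g H).neighborSet (Sum.inl a))] :
    (G ⊕g H).neighborFinset (Sum.inl a) = (G.neighborFinset a).map ⟨Sum.inl, Sum.inl_injective⟩ := by
  ext w
  cases w with
  | inl b => simp [SimpleGraph.mem_neighborFinset]
  | inr b => simp [SimpleGraph.mem_neighborFinset]

lemma sum_nf_inr {α β : Type*} [Fintype α] [Fintype β] [DecidableEq α] [DecidableEq β]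
    (G : SimpleGraph α) (H : SimpleGraph β) [DecidableRel H.Adj]
    (b : β) [Fintype ((G ⊕g H).neighborSet (Sum.inr b))] :
    (G ⊕g H).neighborFinset (Sum.inr b) = (H.neighborFinset b).map ⟨Sum.inr, Sum.inr_injective⟩ := by
  ext w
  cases w with
  | inl a => simp [SimpleGraph.mem_neighborFinset]
  | inr a => simp [SimpleGraph.mem_neighborFinset]

lemma triangleUnion_nf (k : ℕ) [DecidableRel (triangleUnion k).Adj] (v : Fin k × Fin 3) :
    (triangleUnion k).neighborFinset v = ({v.1} ×ˢ (Finset.univ : Finset (Fin 3))).erase v := by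
  ext u
  simp only [SimpleGraph.mem_neighborFinset]
  simp only [triangleUnion, SimpleGraph.fromRel_adj,
    Finset.mem_erase, Finset.mem_product, Finset.mem_singleton, Finset.mem_univ, and_true]
  constructor
  · rintro ⟨h1, h2 | h2⟩
    · exact ⟨h1.symm, h2.symm⟩
    · exact ⟨h1.symm, h2⟩
  · rintro ⟨h1, h2⟩
    exact ⟨h1.symm, Or.inl h2.symm⟩

lemma triangleUnion_degree (k : ℕ) [DecidableRel (triangleUnion k).Adj] (v : Fin k × Fin 3) :
    (triangleUnion k).degree v = 2 := by
  rw [SimpleGraph.degree, triangleUnion_nf, Finset.card_erase_of_mem (by simp),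
    Finset.card_product]
  simp

lemma starGraph_nf_zero (M : ℕ) [DecidableRel (starGraphK M).Adj] :
    (starGraphK M).neighborFinset 0 = Finset.univ.erase 0 := by
  ext u
  simp only [SimpleGraph.mem_neighborFinset]
  simp only [starGraphK, SimpleGraph.fromRel_adj,
    Finset.mem_erase, Finset.mem_univ, and_true]
  constructor
  · rintro ⟨h1, _⟩; exact h1.symm
  · intro h; exact ⟨h.symm, Or.inl trivial⟩

lemma starGraph_nf_ne (M : ℕ) [DecidableRel (starGraphK M).Adj] (i : Fin (M + 1)) (hi : i ≠ 0) :
    (starGraphK M).neighborFinset i = {0} := by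
  ext u
  simp only [SimpleGraph.mem_neighborFinset]
  simp only [starGraphK, SimpleGraph.fromRel_adj,
    Finset.mem_singleton]
  constructor
  · rintro ⟨h1, h2 | h2⟩
    · exact absurd h2 hi
    · exact h2
  · rintro rfl
    exact ⟨hi, Or.inr rfl⟩

lemma ncard_model_star (k M : ℕ) :
    (triangleUnion k ⊕g starGraphK M).edgeSet.ncard = 3 * k + M := by
  classical
  set Gm := triangleUnion k ⊕g starGraphK M with hGm
  have hs := Gm.sum_degrees_eq_twice_card_edges
  have hdeg : ∀ v, Gm.degree v = 2 * (3 * k) + 2 * M - (2 * (3*k) + 2*M) + Gm.degree v := by omega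
  have hsum : ∑ v, Gm.degree v = 2 * (3 * k) + 2 * M := by
    rw [Fintype.sum_sum_type]
    have h1 : ∀ a : Fin k × Fin 3, Gm.degree (Sum.inl a) = 2 := by
      intro a
      rw [SimpleGraph.degree, sum_nf_inl, Finset.card_map, ← SimpleGraph.degree,
        triangleUnion_degree]
    have h2a : Gm.degree (Sum.inr 0) = M := by
      rw [SimpleGraph.degree, sum_nf_inr, Finset.card_map, starGraph_nf_zero,
        Finset.card_erase_of_mem (by simp), Finset.card_univ, Fintype.card_fin]
      omega
    have h2b : ∀ b : Fin (M + 1), b ≠ 0 → Gm.degree (Sum.inr b) = 1 := by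
      intro b hb
      rw [SimpleGraph.degree, sum_nf_inr, Finset.card_map, starGraph_nf_ne M b hb,
        Finset.card_singleton]
    rw [Finset.sum_congr rfl (fun a _ => h1 a), Finset.sum_const, Finset.card_univ,
      Fintype.card_prod, Fintype.card_fin, Fintype.card_fin, smul_eq_mul]
    have : ∑ b : Fin (M + 1), Gm.degree (Sum.inr b)
        = ∑ b ∈ Finset.univ.erase 0, Gm.degree (Sum.inr b) + Gm.degree (Sum.inr 0) :=
      (Finset.sum_erase_add _ _ (Finset.mem_univ 0)).symm
    rw [this, h2a, Finset.sum_congr rfl (fun b hb => h2b b (Finset.ne_of_mem_erase hb)),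
      Finset.sum_const, Finset.card_erase_of_mem (by simp), Finset.card_univ, Fintype.card_fin]
    simp
    ring
  have hs : 2 * Gm.edgeFinset.card = 2 * (3 * k) + 2 * M := by rw [← hs]; convert hsum
  have hcard : Gm.edgeFinset.card = 3 * k + M := by omega
  rw [Set.ncard_eq_toFinset_card']
  exact hcard

lemma ncard_model_isolated (k : ℕ) :
    (triangleUnion k ⊕g (⊥ : SimpleGraph (Fin 1))).edgeSet.ncard = 3 * k := by
  classical
  set Gm := triangleUnion k ⊕g (⊥ : SimpleGraph (Fin 1)) with hGm
  have hs := Gm.sum_degrees_eq_twice_card_edges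
  have hsum : ∑ v, Gm.degree v = 2 * (3 * k) := by
    rw [Fintype.sum_sum_type]
    have h1 : ∀ a : Fin k × Fin 3, Gm.degree (Sum.inl a) = 2 := by
      intro a
      rw [SimpleGraph.degree, sum_nf_inl, Finset.card_map, ← SimpleGraph.degree,
        triangleUnion_degree]
    have h2 : ∀ b : Fin 1, Gm.degree (Sum.inr b) = 0 := by
      intro b
      rw [SimpleGraph.degree, sum_nf_inr, Finset.card_map, ← SimpleGraph.degree]
      exact SimpleGraph.bot_degree b
    rw [Finset.sum_congr rfl (fun a _ => h1 a), Finset.sum_congr rfl (fun b _ => h2 b),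
      Finset.sum_const, Finset.sum_const, Finset.card_univ, Fintype.card_prod,
      Fintype.card_fin, Fintype.card_fin]
    simp
    ring
  have hs : 2 * Gm.edgeFinset.card = 2 * (3 * k) := by rw [← hs]; convert hsum
  have hcard : Gm.edgeFinset.card = 3 * k := by omega
  rw [Set.ncard_eq_toFinset_card']
  exact hcard

end counting

/-- A `P_4`-free graph on `n = 3t + 1` vertices (`t ≥ 1`) has at
most `3t` edges, with equality iff it is the disjoint union of `t` triangles and an
isolated vertex, or, for some `0 ≤ ℓ ≤ t - 1`, the disjoint union of `t - ℓ - 1`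
triangles and the star `K_{1, 3ℓ+3}`. -/
theorem P4_free_extremal_3t_add_one (t : ℕ) (ht : 1 ≤ t)
    (G : SimpleGraph (Fin (3 * t + 1)))
    (hfree : ¬ CopyIn (pathGraph 4) G) :
    G.edgeSet.ncard ≤ 3 * t ∧
      (G.edgeSet.ncard = 3 * t ↔
        Nonempty (G ≃g (triangleUnion t ⊕g (⊥ : SimpleGraph (Fin 1)))) ∨
        ∃ ℓ : ℕ, ℓ ≤ t - 1 ∧
          Nonempty (G ≃g (triangleUnion (t - ℓ - 1) ⊕g starGraphK (3 * ℓ + 3)))) := by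
  letI : DecidableRel G.Adj := Classical.decRel _
  classical
  -- Step 1 : there is a vertex with gmap none
  have hnone_exists : ∃ c0 : Fin (3*t+1), gmap G c0 = none := by
    by_contra hall
    push_neg at hall
    have hsome : ∀ v, ∃ e, gmap G v = some e := by
      intro v
      rcases h : gmap G v with _ | e
      · exact absurd h (hall v)
      · exact ⟨e, rfl⟩
    have hnodeg1 : ∀ v, (G.neighborFinset v).card ≠ 1 := by
      intro v hv1
      obtain ⟨w, hw⟩ := Finset.card_eq_one.mp hv1
      have hvw : G.Adj v w := adj_of_mem_nf hw (by simp)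
      obtain ⟨e, he⟩ := hsome w
      rcases gmap_inv he with ⟨hw1, x, hwx, hwc, _⟩ | ⟨x, y, hxy, hwt, _⟩
      · have hNw : G.neighborFinset w = {v} := nf_eq_singleton hvw.symm hw1
        rcases lt_trichotomy v w with h | h | h
        · obtain ⟨e', he'⟩ := hsome v
          rw [gmap_deg1 hw, if_pos ⟨hw1, h⟩] at he'
          exact nomatch he'
        · exact hvw.ne h
        · rw [gmap_deg1 hNw, if_pos ⟨hv1, h⟩] at he
          exact nomatch he
      · obtain ⟨hx2, hy2, -, -⟩ := tri_endpoints_deg hfree hxy hwt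
        have hvm : v ∈ ({x, y} : Finset _) := by
          rw [← hwt, SimpleGraph.mem_neighborFinset]; exact hvw.symm
        rcases mem_pair_ne hvm with rfl | rfl
        · omega
        · omega
    have hallTri : ∀ v, TriVert G v := by
      intro v
      obtain ⟨e, he⟩ := hsome v
      rcases gmap_inv he with ⟨hv1, -⟩ | ⟨x, y, hxy, hvt, -⟩
      · exact absurd hv1 (hnodeg1 v)
      · exact ⟨x, y, hxy, hvt⟩
    have hdvd := partition_card Finset.univ (triSet G) (fun v _ => mem_triSet_self v)
      (fun v _ => Finset.subset_univ _) (fun v _ => triSet_card (hallTri v))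
      (fun v _ u hu => triSet_eq hfree (hallTri v) hu)
    rw [Finset.card_univ, Fintype.card_fin] at hdvd
    omega
  obtain ⟨c0, hc0⟩ := hnone_exists
  -- Step 2 : injection from edges
  have hchoice : ∀ e ∈ G.edgeFinset, ∃ v, gmap G v = some e := by
    intro e he
    rw [SimpleGraph.mem_edgeFinset] at he
    revert he
    refine e.ind ?_
    intro a b he
    exact gmap_surj hfree he
  set F : Sym2 (Fin (3*t+1)) → Fin (3*t+1) :=
    fun e => if he : e ∈ G.edgeFinset then (hchoice e he).choose else c0 with hF
  have hFspec : ∀ e ∈ G.edgeFinset, gmap G (F e) = some e := by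
    intro e he
    simp only [hF, dif_pos he]
    exact (hchoice e he).choose_spec
  have hmaps : ∀ e ∈ G.edgeFinset, F e ∈ Finset.univ.erase c0 := by
    intro e he
    rw [Finset.mem_erase]
    refine ⟨?_, Finset.mem_univ _⟩
    intro h
    have := hFspec e he
    rw [h, hc0] at this
    exact nomatch this
  have hinjF : Set.InjOn F G.edgeFinset := by
    intro e he e' he' h
    have h1 := hFspec e he
    rw [h, hFspec e' he'] at h1
    exact (Option.some_injective _ h1).symm
  have hle : G.edgeFinset.card ≤ 3 * t := by
    have := Finset.card_le_card_of_injOn F hmaps hinjF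
    rwa [Finset.card_erase_of_mem (Finset.mem_univ _), Finset.card_univ, Fintype.card_fin,
      Nat.add_sub_cancel] at this
  have hEcard : G.edgeSet.ncard = G.edgeFinset.card := Set.ncard_eq_toFinset_card' _
  refine ⟨by rw [hEcard]; exact hle, ?_, ?_⟩
  swap
  · -- easy direction
    rintro (h | ⟨ℓ, hℓ, h⟩)
    · obtain ⟨iso⟩ := h
      rw [ncard_eq_of_iso iso, ncard_model_isolated]
    · obtain ⟨iso⟩ := h
      rw [ncard_eq_of_iso iso, ncard_model_star]
      omega
  -- hard direction
  intro hEq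
  have hcardE : G.edgeFinset.card = 3 * t := by rw [← hEcard]; exact hEq
  -- every vertex other than c0 has gmap some
  have himg : G.edgeFinset.image F = Finset.univ.erase c0 := by
    apply Finset.eq_of_subset_of_card_le
    · intro v hv
      obtain ⟨e, he, rfl⟩ := Finset.mem_image.mp hv
      exact hmaps e he
    · rw [Finset.card_erase_of_mem (Finset.mem_univ _), Finset.card_univ, Fintype.card_fin,
        Nat.add_sub_cancel, Finset.card_image_of_injOn hinjF, hcardE]
  have hsome : ∀ v : Fin (3*t+1), v ≠ c0 → ∃ e, gmap G v = some e := by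
    intro v hv
    have hvm : v ∈ G.edgeFinset.image F := by
      rw [himg, Finset.mem_erase]; exact ⟨hv, Finset.mem_univ _⟩
    obtain ⟨e, he, hFe⟩ := Finset.mem_image.mp hvm
    exact ⟨e, by rw [← hFe]; exact hFspec e he⟩
  -- structure
  set L : Finset (Fin (3*t+1)) := G.neighborFinset c0 with hL
  set S : Finset (Fin (3*t+1)) := insert c0 L with hS
  set C : Finset (Fin (3*t+1)) := Finset.univ \ S with hC
  have hc0L : c0 ∉ L := by
    rw [hL, SimpleGraph.mem_neighborFinset]
    exact G.irrefl
  have hleaf : ∀ u ∈ L, G.neighborFinset u = {c0} := by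
    intro u hu
    rw [hL, SimpleGraph.mem_neighborFinset] at hu
    have hu0 : u ≠ c0 := hu.ne'
    obtain ⟨e, he⟩ := hsome u hu0
    rcases gmap_inv he with ⟨hu1, -, -, -⟩ | ⟨x, y, hxy, hut, -⟩
    · exact nf_eq_singleton hu.symm hu1
    · exfalso
      have hc0m : c0 ∈ ({x, y} : Finset _) := by
        rw [← hut, SimpleGraph.mem_neighborFinset]; exact hu.symm
      obtain ⟨-, -, hNx, hNy⟩ := tri_endpoints_deg hfree hxy hut
      rcases mem_pair_ne hc0m with rfl | rfl
      · have hadj : G.Adj u y := adj_of_mem_nf hut (by simp)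
        rw [gmap_tri hadj hNx] at hc0
        exact nomatch hc0
      · have hadj : G.Adj u x := adj_of_mem_nf hut (by simp)
        rw [gmap_tri hadj hNy] at hc0
        exact nomatch hc0
  have hK2none : ∀ v w : Fin (3*t+1), v ≠ c0 → w ≠ c0 → G.Adj v w →
      (G.neighborFinset v).card = 1 → (G.neighborFinset w).card = 1 → False := by
    intro v w hv0 hw0 hadj hv1 hw1
    have hNv : G.neighborFinset v = {w} := nf_eq_singleton hadj hv1
    have hNw : G.neighborFinset w = {v} := nf_eq_singleton hadj.symm hw1
    rcases lt_trichotomy v w with h | h | h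
    · obtain ⟨e, he⟩ := hsome v hv0
      rw [gmap_deg1 hNv, if_pos ⟨hw1, h⟩] at he
      exact nomatch he
    · exact hadj.ne h
    · obtain ⟨e, he⟩ := hsome w hw0
      rw [gmap_deg1 hNw, if_pos ⟨hv1, h⟩] at he
      exact nomatch he
  have htri : ∀ v, v ∉ S → TriVert G v := by
    intro v hvS
    rw [hS, Finset.mem_insert] at hvS
    push_neg at hvS
    obtain ⟨hv0, hvL⟩ := hvS
    obtain ⟨e, he⟩ := hsome v hv0
    rcases gmap_inv he with ⟨hv1, w, hvw, -, -⟩ | ⟨x, y, hxy, hvt, -⟩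
    · exfalso
      have hadj : G.Adj v w := adj_of_mem_nf hvw (by simp)
      have hw0 : w ≠ c0 := by
        rintro rfl
        exact hvL (by rw [hL, SimpleGraph.mem_neighborFinset]; exact hadj.symm)
      obtain ⟨e', he'⟩ := hsome w hw0
      rcases gmap_inv he' with ⟨hw1, -, -, -⟩ | ⟨x, y, hxy, hwt, -⟩
      · exact hK2none v w hv0 hw0 hadj hv1 hw1
      · have hvm : v ∈ ({x, y} : Finset _) := by
          rw [← hwt, SimpleGraph.mem_neighborFinset]; exact hadj.symm
        obtain ⟨hx2, hy2, -, -⟩ := tri_endpoints_deg hfree hxy hwt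
        rcases mem_pair_ne hvm with rfl | rfl
        · omega
        · omega
    · exact ⟨x, y, hxy, hvt⟩
  have hnotriv : ∀ v, v ∈ S → ¬ TriVert G v := by
    intro v hvS hTv
    obtain ⟨x, y, hxy, hNv⟩ := hTv
    rw [hS, Finset.mem_insert] at hvS
    rcases hvS with rfl | hvL
    · rw [gmap_tri hxy hNv] at hc0
      exact nomatch hc0
    · have := hleaf v hvL
      rw [this] at hNv
      have := congrArg Finset.card hNv
      rw [Finset.card_singleton, pair_card hxy.ne] at this
      omega
  have hmemC : ∀ v, v ∈ C ↔ v ∉ S := by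
    intro v
    rw [hC, Finset.mem_sdiff]
    simp
  have htriC : ∀ v ∈ C, triSet G v ⊆ C := by
    intro v hv u hu
    have hTv := htri v ((hmemC v).mp hv)
    have hTu := triVert_of_mem hfree hTv hu
    rw [hmemC]
    intro huS
    exact hnotriv u huS hTu
  -- adjacency characterizations
  have hCadj : ∀ a b, a ∈ C → b ∈ C → (G.Adj a b ↔ (a ≠ b ∧ triSet G a = triSet G b)) := by
    intro a b ha hb
    constructor
    · intro h
      refine ⟨h.ne, ?_⟩
      have hbm : b ∈ triSet G a := Finset.mem_insert_of_mem (by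
        rw [SimpleGraph.mem_neighborFinset]; exact h)
      exact (triSet_eq hfree (htri a ((hmemC a).mp ha)) hbm).symm
    · rintro ⟨hne, hts⟩
      have hbm : b ∈ triSet G a := by
        rw [hts]; exact mem_triSet_self b
      rw [triSet, Finset.mem_insert] at hbm
      rcases hbm with rfl | hbm
      · exact absurd rfl hne.symm
      · rw [SimpleGraph.mem_neighborFinset] at hbm
        exact hbm
  have hcross : ∀ a b, a ∈ C → b ∉ C → ¬ G.Adj a b := by
    intro a b ha hb hadj
    exact hb (htriC a ha (Finset.mem_insert_of_mem (by
      rw [SimpleGraph.mem_neighborFinset]; exact hadj)))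
  have hSadj : ∀ a b, a ∉ C → b ∉ C → (G.Adj a b ↔ a ≠ b ∧ (a = c0 ∨ b = c0)) := by
    intro a b ha hb
    rw [hmemC, not_not] at ha hb
    constructor
    · intro h
      refine ⟨h.ne, ?_⟩
      by_contra hcon
      push_neg at hcon
      obtain ⟨ha0, hb0⟩ := hcon
      have haL : a ∈ L := by
        rw [hS, Finset.mem_insert] at ha
        tauto
      have : b ∈ G.neighborFinset a := by rw [SimpleGraph.mem_neighborFinset]; exact h
      rw [hleaf a haL, Finset.mem_singleton] at this
      exact hb0 this
    · rintro ⟨hne, rfl | rfl⟩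
      · have hbL : b ∈ L := by
          rw [hS, Finset.mem_insert] at hb
          rcases hb with rfl | hb
          · exact absurd rfl hne
          · exact hb
        rw [hL, SimpleGraph.mem_neighborFinset] at hbL
        exact hbL
      · have haL : a ∈ L := by
          rw [hS, Finset.mem_insert] at ha
          rcases ha with rfl | ha
          · exact absurd rfl hne
          · exact ha
        rw [hL, SimpleGraph.mem_neighborFinset] at haL
        exact haL.symm
  -- cardinalities
  have hSsub : S ⊆ Finset.univ := Finset.subset_univ _
  have hScard : S.card = L.card + 1 := by
    rw [hS, Finset.card_insert_of_notMem hc0L]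
  have hCcard : C.card = 3 * t + 1 - S.card := by
    rw [hC, Finset.card_sdiff_of_subset hSsub]
    congr 1
    rw [Finset.card_univ, Fintype.card_fin]
  have hSle : S.card ≤ 3 * t + 1 := by
    have := Finset.card_le_univ S
    rwa [Fintype.card_fin] at this
  have hdvd := partition_card C (triSet G) (fun v _ => mem_triSet_self v)
    htriC (fun v hv => triSet_card (htri v ((hmemC v).mp hv)))
    (fun v hv u hu => triSet_eq hfree (htri v ((hmemC v).mp hv)) hu)
  set m : ℕ := L.card with hm
  -- case split on m
  rcases Nat.eq_zero_or_pos m with hm0 | hmpos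
  · -- t triangles plus an isolated vertex
    left
    have hk : C.card = 3 * t := by omega
    obtain ⟨φ, hφ⟩ := partition_equiv C (triSet G) t (fun v _ => mem_triSet_self v)
      htriC (fun v hv => triSet_card (htri v ((hmemC v).mp hv)))
      (fun v hv u hu => triSet_eq hfree (htri v ((hmemC v).mp hv)) hu) hk
    have hCc : ∀ x : Fin (3*t+1), ¬ x ∈ C ↔ x = c0 := by
      intro x
      rw [hmemC, not_not, hS, Finset.mem_insert]
      constructor
      · rintro (rfl | hx)
        · rfl
        · exact absurd (Finset.card_eq_zero.mp hm0 ▸ hx) (Finset.notMem_empty x)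
      · rintro rfl; exact Or.inl rfl
    let χ : {x : Fin (3*t+1) // ¬ x ∈ C} ≃ Fin 1 :=
      { toFun := fun _ => 0
        invFun := fun _ => ⟨c0, (hCc c0).mpr rfl⟩
        left_inv := fun v => Subtype.ext ((hCc v.1).mp v.2).symm
        right_inv := fun i => Subsingleton.elim _ _ }
    let Φ : Fin (3*t+1) ≃ ((Fin t × Fin 3) ⊕ Fin 1) :=
      (Equiv.sumCompl (· ∈ C)).symm.trans (Equiv.sumCongr φ χ)
    refine ⟨⟨Φ, ?_⟩⟩
    intro a b
    by_cases ha : a ∈ C <;> by_cases hb : b ∈ C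
    · have hΦa : Φ a = Sum.inl (φ ⟨a, ha⟩) := by
        simp [Φ, Equiv.sumCompl_symm_apply_of_pos ha]
      have hΦb : Φ b = Sum.inl (φ ⟨b, hb⟩) := by
        simp [Φ, Equiv.sumCompl_symm_apply_of_pos hb]
      rw [hΦa, hΦb]
      have : (triangleUnion t ⊕g (⊥ : SimpleGraph (Fin 1))).Adj
          (Sum.inl (φ ⟨a, ha⟩)) (Sum.inl (φ ⟨b, hb⟩)) ↔
          (triangleUnion t).Adj (φ ⟨a, ha⟩) (φ ⟨b, hb⟩) := by
        simp
      rw [this, hCadj a b ha hb]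
      rw [triangleUnion, SimpleGraph.fromRel_adj]
      constructor
      · rintro ⟨hne, h | h⟩
        · exact ⟨fun hc => hne (congrArg φ (Subtype.ext hc)), (hφ _ _).mp h⟩
        · exact ⟨fun hc => hne (congrArg φ (Subtype.ext hc)), (hφ _ _).mp h.symm⟩
      · rintro ⟨hne, h⟩
        refine ⟨fun hc => hne (Subtype.ext_iff.mp (φ.injective hc)), Or.inl ((hφ _ _).mpr h)⟩
    · have hΦa : Φ a = Sum.inl (φ ⟨a, ha⟩) := by
        simp [Φ, Equiv.sumCompl_symm_apply_of_pos ha]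
      have hΦb : Φ b = Sum.inr (χ ⟨b, hb⟩) := by
        simp [Φ, Equiv.sumCompl_symm_apply_of_neg hb]
      rw [hΦa, hΦb]
      simp only [SimpleGraph.sum_adj]
      constructor
      · intro h; exact absurd h (by simp)
      · intro h; exact absurd h (hcross a b ha hb)
    · have hΦa : Φ a = Sum.inr (χ ⟨a, ha⟩) := by
        simp [Φ, Equiv.sumCompl_symm_apply_of_neg ha]
      have hΦb : Φ b = Sum.inl (φ ⟨b, hb⟩) := by
        simp [Φ, Equiv.sumCompl_symm_apply_of_pos hb]
      rw [hΦa, hΦb]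
      simp only [SimpleGraph.sum_adj]
      constructor
      · intro h; exact absurd h (by simp)
      · intro h; exact absurd h.symm (hcross b a hb ha)
    · have hΦa : Φ a = Sum.inr (χ ⟨a, ha⟩) := by
        simp [Φ, Equiv.sumCompl_symm_apply_of_neg ha]
      have hΦb : Φ b = Sum.inr (χ ⟨b, hb⟩) := by
        simp [Φ, Equiv.sumCompl_symm_apply_of_neg hb]
      rw [hΦa, hΦb]
      have ha' : a = c0 := (hCc a).mp ha
      have hb' : b = c0 := (hCc b).mp hb
      subst ha'
      constructor
      · intro h
        exfalso
        simp only [SimpleGraph.sum_adj] at h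
        exact h.elim
      · intro h
        exact absurd (hb' ▸ h) (G.irrefl)
  · -- star case
    right
    have hdvd3 : (3 : ℕ) ∣ C.card := Dvd.intro _ hdvd.symm
    have hmod : m % 3 = 0 := by omega
    have hm3 : 3 ≤ m := by omega
    refine ⟨m / 3 - 1, by omega, ?_⟩
    set ℓ : ℕ := m / 3 - 1 with hℓ
    have hmℓ : m = 3 * ℓ + 3 := by omega
    have hk : C.card = 3 * (t - ℓ - 1) := by omega
    obtain ⟨φ, hφ⟩ := partition_equiv C (triSet G) (t - ℓ - 1) (fun v _ => mem_triSet_self v)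
      htriC (fun v hv => triSet_card (htri v ((hmemC v).mp hv)))
      (fun v hv u hu => triSet_eq hfree (htri v ((hmemC v).mp hv)) hu) hk
    obtain ⟨χ0, hχ0⟩ := star_equiv L c0 hc0L (3 * ℓ + 3) (by omega)
    have hCS : ∀ x : Fin (3*t+1), ¬ x ∈ C ↔ x ∈ insert c0 L := by
      intro x
      rw [hmemC, not_not, hS]
    let χ : {x : Fin (3*t+1) // ¬ x ∈ C} ≃ Fin (3 * ℓ + 3 + 1) :=
      (Equiv.subtypeEquivRight hCS).trans χ0
    have hχ : ∀ v : {x : Fin (3*t+1) // ¬ x ∈ C}, (χ v = 0 ↔ v.1 = c0) := by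
      intro v
      exact hχ0 ((Equiv.subtypeEquivRight hCS) v)
    let Φ : Fin (3*t+1) ≃ ((Fin (t - ℓ - 1) × Fin 3) ⊕ Fin (3 * ℓ + 3 + 1)) :=
      (Equiv.sumCompl (· ∈ C)).symm.trans (Equiv.sumCongr φ χ)
    refine ⟨⟨Φ, ?_⟩⟩
    intro a b
    by_cases ha : a ∈ C <;> by_cases hb : b ∈ C
    · have hΦa : Φ a = Sum.inl (φ ⟨a, ha⟩) := by
        simp [Φ, Equiv.sumCompl_symm_apply_of_pos ha]
      have hΦb : Φ b = Sum.inl (φ ⟨b, hb⟩) := by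
        simp [Φ, Equiv.sumCompl_symm_apply_of_pos hb]
      rw [hΦa, hΦb]
      have : (triangleUnion (t - ℓ - 1) ⊕g starGraphK (3 * ℓ + 3)).Adj
          (Sum.inl (φ ⟨a, ha⟩)) (Sum.inl (φ ⟨b, hb⟩)) ↔
          (triangleUnion (t - ℓ - 1)).Adj (φ ⟨a, ha⟩) (φ ⟨b, hb⟩) := by
        simp
      rw [this, hCadj a b ha hb]
      rw [triangleUnion, SimpleGraph.fromRel_adj]
      constructor
      · rintro ⟨hne, h | h⟩
        · exact ⟨fun hc => hne (congrArg φ (Subtype.ext hc)), (hφ _ _).mp h⟩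
        · exact ⟨fun hc => hne (congrArg φ (Subtype.ext hc)), (hφ _ _).mp h.symm⟩
      · rintro ⟨hne, h⟩
        refine ⟨fun hc => hne (Subtype.ext_iff.mp (φ.injective hc)), Or.inl ((hφ _ _).mpr h)⟩
    · have hΦa : Φ a = Sum.inl (φ ⟨a, ha⟩) := by
        simp [Φ, Equiv.sumCompl_symm_apply_of_pos ha]
      have hΦb : Φ b = Sum.inr (χ ⟨b, hb⟩) := by
        simp [Φ, Equiv.sumCompl_symm_apply_of_neg hb]
      rw [hΦa, hΦb]
      simp only [SimpleGraph.sum_adj]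
      constructor
      · intro h; exact absurd h (by simp)
      · intro h; exact absurd h (hcross a b ha hb)
    · have hΦa : Φ a = Sum.inr (χ ⟨a, ha⟩) := by
        simp [Φ, Equiv.sumCompl_symm_apply_of_neg ha]
      have hΦb : Φ b = Sum.inl (φ ⟨b, hb⟩) := by
        simp [Φ, Equiv.sumCompl_symm_apply_of_pos hb]
      rw [hΦa, hΦb]
      simp only [SimpleGraph.sum_adj]
      constructor
      · intro h; exact absurd h (by simp)
      · intro h; exact absurd h.symm (hcross b a hb ha)
    · have hΦa : Φ a = Sum.inr (χ ⟨a, ha⟩) := by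
        simp [Φ, Equiv.sumCompl_symm_apply_of_neg ha]
      have hΦb : Φ b = Sum.inr (χ ⟨b, hb⟩) := by
        simp [Φ, Equiv.sumCompl_symm_apply_of_neg hb]
      rw [hΦa, hΦb]
      have hadj : (starGraphK (3 * ℓ + 3)).Adj (χ ⟨a, ha⟩) (χ ⟨b, hb⟩) ↔
          χ ⟨a, ha⟩ ≠ χ ⟨b, hb⟩ ∧ (χ ⟨a, ha⟩ = 0 ∨ χ ⟨b, hb⟩ = 0) := by
        rw [starGraphK, SimpleGraph.fromRel_adj]
      have : (triangleUnion (t - ℓ - 1) ⊕g starGraphK (3 * ℓ + 3)).Adj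
          (Sum.inr (χ ⟨a, ha⟩)) (Sum.inr (χ ⟨b, hb⟩)) ↔
          (starGraphK (3 * ℓ + 3)).Adj (χ ⟨a, ha⟩) (χ ⟨b, hb⟩) := by
        simp
      rw [this, hadj, hSadj a b ha hb]
      constructor
      · rintro ⟨hne, h | h⟩
        · exact ⟨fun hc => hne (congrArg χ (Subtype.ext hc)),
            Or.inl ((hχ ⟨a, ha⟩).mp h)⟩
        · exact ⟨fun hc => hne (congrArg χ (Subtype.ext hc)),
            Or.inr ((hχ ⟨b, hb⟩).mp h)⟩
      · rintro ⟨hne, h | h⟩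
        · refine ⟨fun hc => hne (Subtype.ext_iff.mp (χ.injective hc)),
            Or.inl ((hχ ⟨a, ha⟩).mpr h)⟩
        · refine ⟨fun hc => hne (Subtype.ext_iff.mp (χ.injective hc)),
            Or.inr ((hχ ⟨b, hb⟩).mpr h)⟩
end

section
/- Let k ≥ 1 and let G be a graph containing two disjoint vertex sets A and B with |A| ≥ 2k+1 and |B| ≥ 2k+1 such that every vertex of A is adjacent to every vertex of B, and let y be a vertex of G outside A ∪ B having at least 3 neighbors in A and at least 3 neighbors in B. If G has an edge with both endpoints in A, or with both endpoints in B, one of whose endpoints is a neighbor of y, then G contains a subgraph isomorphic to C_{2k+1}□P_2. -/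
open SimpleGraph

lemma exists_fn {V : Type*} (m : ℕ) (S : Set V) (d : V) (h : (m : ℕ∞) ≤ S.encard) :
    ∃ f : ℕ → V, (∀ i, i < m → f i ∈ S) ∧ (∀ i j, i < m → j < m → f i = f j → i = j) := by
  induction m generalizing S with
  | zero => exact ⟨fun _ => d, by omega, by omega⟩
  | succ m ih =>
    have hne : S.Nonempty := by
      rw [← Set.one_le_encard_iff_nonempty]
      exact le_trans (by exact_mod_cast Nat.one_le_iff_ne_zero.mpr (by omega)) h
    obtain ⟨x, hx⟩ := hne
    have h2 : (m : ℕ∞) ≤ (S \ {x}).encard := by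
      have := Set.encard_diff_singleton_add_one hx
      have h1 : (m : ℕ∞) + 1 ≤ (S \ {x}).encard + 1 := by
        rw [this]; exact_mod_cast h
      exact (ENat.add_le_add_iff_right (by simp)).mp h1
    obtain ⟨f, hf1, hf2⟩ := ih (S \ {x}) h2
    refine ⟨fun i => if i = 0 then x else f (i - 1), fun i hi => ?_, fun i j hi hj hij => ?_⟩
    · by_cases h0 : i = 0
      · simpa [h0] using hx
      · simp only [h0, if_false]
        exact (hf1 (i-1) (by omega)).1
    · by_cases h0 : i = 0 <;> by_cases h1 : j = 0 <;> simp only [h0, h1, if_true, if_false] at hij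
      · omega
      · exact absurd hij.symm (hf1 (j-1) (by omega)).2
      · exact absurd hij (hf1 (i-1) (by omega)).2
      · have := hf2 (i-1) (j-1) (by omega) (by omega) hij; omega

lemma encard_sub_le {V : Type*} (S T : Set V) {n m : ℕ} (hS : (n : ℕ∞) ≤ S.encard)
    (hT : T.encard ≤ (m : ℕ∞)) (hnm : m ≤ n) : ((n - m : ℕ) : ℕ∞) ≤ (S \ T).encard := by
  have h1 : S.encard ≤ (S \ T).encard + T.encard := Set.encard_le_encard_diff_add_encard S T
  have h2 : (n : ℕ∞) ≤ (S \ T).encard + m := le_trans hS (le_trans h1 (by gcongr))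
  rcases eq_or_ne (S \ T).encard ⊤ with h | h
  · simp [h]
  · lift (S \ T).encard to ℕ using h with dd hd
    rw [← Nat.cast_add, Nat.cast_le] at h2
    exact_mod_cast (by omega : n - m ≤ dd)

lemma encard_triple_le {V : Type*} (u v w : V) : ({u, v, w} : Set V).encard ≤ 3 := by
  calc ({u, v, w} : Set V).encard ≤ ({v, w} : Set V).encard + 1 := Set.encard_insert_le _ _
    _ ≤ (({w} : Set V).encard + 1) + 1 := by gcongr; exact Set.encard_insert_le _ _
    _ ≤ 3 := by rw [Set.encard_singleton]; rfl

lemma encard_pair_le {V : Type*} (u v : V) : ({u, v} : Set V).encard ≤ 2 := by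
  calc ({u, v} : Set V).encard ≤ ({v} : Set V).encard + 1 := Set.encard_insert_le _ _
    _ ≤ 2 := by rw [Set.encard_singleton]; rfl

lemma exists_mem_ne2 {V : Type*} {S : Set V} (h : (3 : ℕ) ≤ S.encard) (u v : V) :
    ∃ a ∈ S, a ≠ u ∧ a ≠ v := by
  have := encard_sub_le S {u, v} (n := 3) (m := 2) (by exact_mod_cast h) (encard_pair_le u v) (by omega)
  have h1 : (S \ {u, v}).Nonempty := by
    rw [← Set.one_le_encard_iff_nonempty]
    exact le_trans (by exact_mod_cast Nat.one_le_iff_ne_zero.mpr (by omega)) this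
  obtain ⟨a, ha⟩ := h1
  exact ⟨a, ha.1, by simpa using fun h => ha.2 (by simp [h]), fun h => ha.2 (by simp [h])⟩

lemma cyc_step {n : ℕ} (hn : 2 ≤ n) {u v : Fin n} (h : (u - v).val = 1) :
    u.val = v.val + 1 ∨ (v.val = n - 1 ∧ u.val = 0) := by
  have : NeZero n := ⟨by omega⟩
  have h1 : (1 : Fin n).val = 1 := by rw [Fin.val_one']; exact Nat.mod_eq_of_lt hn
  have huv : u = 1 + v := by
    rw [← sub_eq_iff_eq_add]
    exact Fin.ext (by rw [h, h1])
  have hval : u.val = (1 + v.val) % n := by rw [huv, Fin.val_add, h1]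
  rcases Nat.lt_or_ge (1 + v.val) n with hlt | hge
  · left; rw [Nat.mod_eq_of_lt hlt] at hval; omega
  · right
    have hv := v.isLt
    have h0 : u.val = 0 := by
      have he : 1 + v.val = n := by omega
      rw [he, Nat.mod_self] at hval; omega
    omega

lemma cyc_adj {k : ℕ} (hk : 1 ≤ k) {u v : Fin (2 * k + 1)} (h : (cycleGraph (2 * k + 1)).Adj u v) :
    u.val = v.val + 1 ∨ v.val = u.val + 1 ∨ (u.val = 0 ∧ v.val = 2 * k) ∨ (v.val = 0 ∧ u.val = 2 * k) := by
  rw [cycleGraph_adj'] at h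
  rcases h with h | h
  · rcases cyc_step (by omega) h with h | h
    · exact Or.inl h
    · exact Or.inr (Or.inr (Or.inl ⟨h.2, by omega⟩))
  · rcases cyc_step (by omega) h with h | h
    · exact Or.inr (Or.inl h)
    · exact Or.inr (Or.inr (Or.inr ⟨h.2, by omega⟩))

lemma key_s8 {V : Type*} (k : ℕ) (hk : 1 ≤ k) (G : SimpleGraph V) (A B : Set V)
    (hAB : Disjoint A B) (hA : (2 * k + 1 : ℕ) ≤ A.encard) (hB : ((2 * k : ℕ) : ℕ∞) ≤ B.encard)
    (hjoin : ∀ a ∈ A, ∀ b ∈ B, G.Adj a b)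
    (y : V) (hyA : y ∉ A) (hyB : y ∉ B)
    (u v : V) (hu : u ∈ A) (hv : v ∈ A) (huv : G.Adj u v) (hyu : G.Adj y u)
    (a' : V) (ha' : a' ∈ A) (ha'u : a' ≠ u) (ha'v : a' ≠ v) (hya' : G.Adj y a')
    (b' : V) (hb' : b' ∈ B) (hyb' : G.Adj y b') :
    CopyIn (oddPrism k) G := by
  -- auxiliary injections
  have hAcard : ((2 * k - 2 : ℕ) : ℕ∞) ≤ (A \ {u, v, a'}).encard := by
    have h1 := encard_sub_le A {u, v, a'} (n := 2 * k + 1) (m := 3) hA (encard_triple_le u v a') (by omega)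
    exact le_trans (Nat.cast_le.mpr (by omega)) h1
  have hBcard : ((2 * k - 1 : ℕ) : ℕ∞) ≤ (B \ {b'}).encard := by
    have h1 := encard_sub_le B {b'} (n := 2 * k) (m := 1) hB (by simp) (by omega)
    exact le_trans (Nat.cast_le.mpr (by omega)) h1
  obtain ⟨fA, fAmem, fAinj⟩ := exists_fn (2 * k - 2) (A \ {u, v, a'}) y hAcard
  obtain ⟨fB, fBmem, fBinj⟩ := exists_fn (2 * k - 1) (B \ {b'}) y hBcard
  -- the two cycles
  obtain ⟨g, g0, g1, gBeq, gAeq⟩ :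
      ∃ g : ℕ → V, g 0 = u ∧ g 1 = v ∧
        (∀ i, 2 ≤ i → i % 2 = 0 → g i = fB (i / 2 - 1)) ∧
        (∀ i, 3 ≤ i → i % 2 = 1 → g i = fA ((i - 3) / 2)) := by
    refine ⟨fun i => if i = 0 then u else if i = 1 then v else
      if i % 2 = 0 then fB (i / 2 - 1) else fA ((i - 3) / 2), rfl, rfl, ?_, ?_⟩
    · intro i h1 h2; simp only
      rw [if_neg (by omega), if_neg (by omega), if_pos h2]
    · intro i h1 h2; simp only
      rw [if_neg (by omega), if_neg (by omega), if_neg (by omega)]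
  obtain ⟨h, he0, he1, he2k, hAeq, hBeq⟩ :
      ∃ h : ℕ → V, h 0 = y ∧ h 1 = b' ∧ h (2 * k) = a' ∧
        (∀ i, 2 ≤ i → i < 2 * k → i % 2 = 0 → h i = fA (k - 1 + (i - 2) / 2)) ∧
        (∀ i, 3 ≤ i → i % 2 = 1 → h i = fB (k + (i - 3) / 2)) := by
    refine ⟨fun i => if i = 0 then y else if i = 1 then b' else if i = 2 * k then a' else
      if i % 2 = 0 then fA (k - 1 + (i - 2) / 2) else fB (k + (i - 3) / 2), rfl, ?_, ?_, ?_, ?_⟩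
    · norm_num
    · simp only; rw [if_neg (by omega), if_neg (by omega)]; simp
    · intro i hi1 hi2 hi3; simp only
      rw [if_neg (by omega), if_neg (by omega), if_neg (by omega), if_pos hi3]
    · intro i hi1 hi2; simp only
      rw [if_neg (by omega), if_neg (by omega), if_neg (by omega), if_neg (by omega)]
  -- basic distinctness helpers
  have hne_AB : ∀ {x z : V}, x ∈ A → z ∈ B → x ≠ z :=
    fun hx hz he => (Set.disjoint_left.mp hAB hx) (he ▸ hz)
  have notuva : ∀ {x : V}, x ∈ A \ ({u, v, a'} : Set V) → x ≠ u ∧ x ≠ v ∧ x ≠ a' := by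
    intro x hx
    have := hx.2; simp only [Set.mem_insert_iff, Set.mem_singleton_iff, not_or] at this
    exact this
  have notb' : ∀ {x : V}, x ∈ B \ ({b'} : Set V) → x ≠ b' := by
    intro x hx; have := hx.2; simpa using this
  -- membership summaries
  have gAmem' : ∀ i, 3 ≤ i → i ≤ 2 * k → i % 2 = 1 → g i ∈ A \ {u, v, a'} := by
    intro i h1 h2 h3; rw [gAeq i h1 h3]; exact fAmem _ (by omega)
  have gBmem' : ∀ i, 2 ≤ i → i ≤ 2 * k → i % 2 = 0 → g i ∈ B \ {b'} := by
    intro i h1 h2 h3; rw [gBeq i h1 h3]; exact fBmem _ (by omega)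
  have hAmem' : ∀ i, 2 ≤ i → i < 2 * k → i % 2 = 0 → h i ∈ A \ {u, v, a'} := by
    intro i h1 h2 h3; rw [hAeq i h1 h2 h3]; exact fAmem _ (by omega)
  have hBmem' : ∀ i, 3 ≤ i → i ≤ 2 * k → i % 2 = 1 → h i ∈ B \ {b'} := by
    intro i h1 h2 h3; rw [hBeq i h1 h3]; exact fBmem _ (by omega)
  have gAmem : ∀ i, i ≤ 2 * k → i % 2 = 1 ∨ i = 0 → g i ∈ A := by
    intro i h1 h2
    rcases Nat.lt_or_ge i 2 with h3 | h3
    · interval_cases i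
      · rw [g0]; exact hu
      · rw [g1]; exact hv
    · exact (gAmem' i (by omega) h1 (by omega)).1
  have gBmem : ∀ i, 2 ≤ i → i ≤ 2 * k → i % 2 = 0 → g i ∈ B :=
    fun i h1 h2 h3 => (gBmem' i h1 h2 h3).1
  have hAmem : ∀ i, 2 ≤ i → i ≤ 2 * k → i % 2 = 0 → h i ∈ A := by
    intro i h1 h2 h3
    rcases eq_or_ne i (2 * k) with h4 | h4
    · rw [h4, he2k]; exact ha'
    · exact (hAmem' i h1 (by omega) h3).1
  have hBmem : ∀ i, i ≤ 2 * k → i % 2 = 1 → h i ∈ B := by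
    intro i h1 h2
    rcases eq_or_ne i 1 with h3 | h3
    · rw [h3, he1]; exact hb'
    · exact (hBmem' i (by omega) h1 h2).1
  have gABmem : ∀ i, i ≤ 2 * k → g i ∈ A ∪ B := by
    intro i h1
    rcases Nat.even_or_odd i with h2 | h2
    · rcases eq_or_ne i 0 with h3 | h3
      · exact Or.inl (gAmem i h1 (Or.inr h3))
      · exact Or.inr (gBmem i (by rcases h2 with ⟨c, hc⟩; omega) h1 (by rcases h2 with ⟨c, hc⟩; omega))
    · exact Or.inl (gAmem i h1 (Or.inl (by rcases h2 with ⟨c, hc⟩; omega)))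
  -- injectivity of g
  have gInj : ∀ i, i ≤ 2 * k → ∀ j, j ≤ 2 * k → g i = g j → i = j := by
    intro i hi j hj he
    rcases Nat.lt_or_ge i 2 with hi2 | hi2 <;> rcases Nat.lt_or_ge j 2 with hj2 | hj2
    · interval_cases i <;> interval_cases j
      · rfl
      · rw [g0, g1] at he; exact absurd he (G.ne_of_adj huv)
      · rw [g0, g1] at he; exact absurd he.symm (G.ne_of_adj huv)
      · rfl
    · by_cases hp : j % 2 = 0
      · exact absurd he (hne_AB (gAmem i hi (by omega)) (gBmem j hj2 hj hp))
      · have hgj := notuva (gAmem' j (by omega) hj (by omega))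
        interval_cases i
        · rw [g0] at he; exact absurd he.symm hgj.1
        · rw [g1] at he; exact absurd he.symm hgj.2.1
    · by_cases hp : i % 2 = 0
      · exact absurd he.symm (hne_AB (gAmem j hj (by omega)) (gBmem i hi2 hi hp))
      · have hgi := notuva (gAmem' i (by omega) hi (by omega))
        interval_cases j
        · rw [g0] at he; exact absurd he hgi.1
        · rw [g1] at he; exact absurd he hgi.2.1
    · by_cases hpi : i % 2 = 0 <;> by_cases hpj : j % 2 = 0
      · rw [gBeq i hi2 hpi, gBeq j hj2 hpj] at he
        have := fBinj _ _ (by omega) (by omega) he; omega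
      · exact absurd he.symm (hne_AB (gAmem j hj (by omega)) (gBmem i hi2 hi hpi))
      · exact absurd he (hne_AB (gAmem i hi (by omega)) (gBmem j hj2 hj hpj))
      · rw [gAeq i (by omega) (by omega), gAeq j (by omega) (by omega)] at he
        have := fAinj _ _ (by omega) (by omega) he; omega
  -- injectivity of h
  have hInj : ∀ i, i ≤ 2 * k → ∀ j, j ≤ 2 * k → h i = h j → i = j := by
    intro i hi j hj he
    have hmemAB : ∀ l, 1 ≤ l → l ≤ 2 * k → h l ∈ A ∪ B := by
      intro l h1 h2
      rcases Nat.even_or_odd l with h3 | h3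
      · exact Or.inl (hAmem l (by rcases h3 with ⟨c, hc⟩; omega) h2 (by rcases h3 with ⟨c, hc⟩; omega))
      · exact Or.inr (hBmem l h2 (by rcases h3 with ⟨c, hc⟩; omega))
    rcases eq_or_ne i 0 with hi0 | hi0 <;> rcases eq_or_ne j 0 with hj0 | hj0
    · omega
    · rw [hi0, he0] at he
      rcases hmemAB j (by omega) hj with hm | hm
      · exact absurd (he ▸ hm) hyA
      · exact absurd (he ▸ hm) hyB
    · rw [hj0, he0] at he
      rcases hmemAB i (by omega) hi with hm | hm
      · exact absurd (he.symm ▸ hm) hyA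
      · exact absurd (he.symm ▸ hm) hyB
    · -- both ≥ 1
      rcases eq_or_ne i (2 * k) with hik | hik <;> rcases eq_or_ne j (2 * k) with hjk | hjk
      · omega
      · rw [hik, he2k] at he
        by_cases hpj : j % 2 = 0
        · have := notuva (hAmem' j (by omega) (by omega) hpj)
          exact absurd he.symm this.2.2
        · rcases eq_or_ne j 1 with hj1 | hj1
          · rw [hj1, he1] at he; exact absurd he (hne_AB ha' hb')
          · exact absurd he (hne_AB ha' (hBmem j hj (by omega)))
      · rw [hjk, he2k] at he
        by_cases hpi : i % 2 = 0
        · have := notuva (hAmem' i (by omega) (by omega) hpi)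
          exact absurd he this.2.2
        · rcases eq_or_ne i 1 with hi1 | hi1
          · rw [hi1, he1] at he; exact absurd he.symm (hne_AB ha' hb')
          · exact absurd he.symm (hne_AB ha' (hBmem i hi (by omega)))
      · -- both in [1, 2k-1]
        rcases eq_or_ne i 1 with hi1 | hi1 <;> rcases eq_or_ne j 1 with hj1 | hj1
        · omega
        · rw [hi1, he1] at he
          by_cases hpj : j % 2 = 0
          · exact absurd he.symm (hne_AB (hAmem j (by omega) hj hpj) hb')
          · exact absurd he.symm (notb' (hBmem' j (by omega) hj (by omega)))
        · rw [hj1, he1] at he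
          by_cases hpi : i % 2 = 0
          · exact absurd he (hne_AB (hAmem i (by omega) hi hpi) hb')
          · exact absurd he (notb' (hBmem' i (by omega) hi (by omega)))
        · by_cases hpi : i % 2 = 0 <;> by_cases hpj : j % 2 = 0
          · rw [hAeq i (by omega) (by omega) hpi, hAeq j (by omega) (by omega) hpj] at he
            have := fAinj _ _ (by omega) (by omega) he; omega
          · exact absurd he (hne_AB (hAmem i (by omega) hi hpi) (hBmem j hj (by omega)))
          · exact absurd he.symm (hne_AB (hAmem j (by omega) hj hpj) (hBmem i hi (by omega)))
          · rw [hBeq i (by omega) (by omega), hBeq j (by omega) (by omega)] at he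
            have := fBinj _ _ (by omega) (by omega) he; omega
  -- g and h are disjoint
  have ghne : ∀ i, i ≤ 2 * k → ∀ j, j ≤ 2 * k → g i ≠ h j := by
    intro i hi j hj he
    rcases eq_or_ne j 0 with hj0 | hj0
    · rw [hj0, he0] at he
      rcases gABmem i hi with hm | hm
      · exact hyA (he ▸ hm)
      · exact hyB (he ▸ hm)
    by_cases hpi : i % 2 = 0 ∧ i ≥ 2
    · -- g i ∈ B \ {b'}
      have hgi := gBmem' i hpi.2 hi hpi.1
      by_cases hpj : j % 2 = 1
      · rcases eq_or_ne j 1 with hj1 | hj1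
        · rw [hj1, he1] at he; exact notb' hgi he
        · rw [gBeq i hpi.2 hpi.1, hBeq j (by omega) hpj] at he
          have := fBinj _ _ (by omega) (by omega) he; omega
      · exact hne_AB (hAmem j (by omega) hj (by omega)) hgi.1 he.symm
    · -- g i ∈ A (i = 0, 1, or odd ≥ 3)
      have hgi : g i ∈ A := gAmem i hi (by omega)
      by_cases hpj : j % 2 = 1
      · exact hne_AB hgi (hBmem j hj hpj) he
      · -- h j ∈ A, j even ≥ 2
        rcases eq_or_ne j (2 * k) with hjk | hjk
        · rw [hjk, he2k] at he
          rcases Nat.lt_or_ge i 2 with hi2 | hi2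
          · interval_cases i
            · rw [g0] at he; exact ha'u he.symm
            · rw [g1] at he; exact ha'v he.symm
          · exact (notuva (gAmem' i (by omega) hi (by omega))).2.2 he
        · have hhj := notuva (hAmem' j (by omega) (by omega) (by omega))
          rcases Nat.lt_or_ge i 2 with hi2 | hi2
          · interval_cases i
            · rw [g0] at he; exact hhj.1 he.symm
            · rw [g1] at he; exact hhj.2.1 he.symm
          · rw [gAeq i (by omega) (by omega), hAeq j (by omega) (by omega) (by omega)] at he
            have := fAinj _ _ (by omega) (by omega) he; omega
  -- adjacency facts
  have gadj : ∀ i j, i ≤ 2 * k → j ≤ 2 * k → j = i + 1 → G.Adj (g i) (g j) := by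
    intro i j hi hj hij
    rcases eq_or_ne i 0 with hi0 | hi0
    · rw [hi0] at hij; rw [hi0, hij, g0, g1]; exact huv
    by_cases hpi : i % 2 = 1
    · exact hjoin _ (gAmem i hi (Or.inl hpi)) _ (gBmem j (by omega) hj (by omega))
    · exact (hjoin _ (gAmem j hj (Or.inl (by omega))) _ (gBmem i (by omega) hi (by omega))).symm
  have gwrap : G.Adj (g (2 * k)) (g 0) := by
    rw [g0]
    exact (hjoin u hu _ (gBmem (2 * k) (by omega) (by omega) (by omega))).symm
  have hadj : ∀ i j, i ≤ 2 * k → j ≤ 2 * k → j = i + 1 → G.Adj (h i) (h j) := by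
    intro i j hi hj hij
    rcases eq_or_ne i 0 with hi0 | hi0
    · rw [hi0] at hij; rw [hi0, hij, he0, he1]; exact hyb'
    by_cases hpi : i % 2 = 1
    · exact (hjoin _ (hAmem j (by omega) hj (by omega)) _ (hBmem i hi hpi)).symm
    · exact hjoin _ (hAmem i (by omega) hi (by omega)) _ (hBmem j hj (by omega))
  have hwrap : G.Adj (h (2 * k)) (h 0) := by
    rw [he0, he2k]; exact hya'.symm
  have gmatch : ∀ i, i ≤ 2 * k → G.Adj (g i) (h i) := by
    intro i hi
    rcases Nat.lt_or_ge i 2 with hi2 | hi2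
    · interval_cases i
      · rw [g0, he0]; exact hyu.symm
      · rw [g1, he1]; exact hjoin v hv b' hb'
    · by_cases hpi : i % 2 = 0
      · exact (hjoin _ (hAmem i hi2 hi hpi) _ (gBmem i hi2 hi hpi)).symm
      · exact hjoin _ (gAmem i hi (Or.inl (by omega))) _ (hBmem i hi (by omega))
  -- assemble the embedding
  refine ⟨⟨fun p => if p.2.val = 0 then g p.1.val else h p.1.val, ?_⟩, ?_⟩
  · rintro ⟨i, s⟩ ⟨j, t⟩ he
    simp only at he
    have hi := i.isLt; have hj := j.isLt
    have hs := s.isLt; have ht := t.isLt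
    rcases (by omega : s.val = 0 ∨ s.val = 1) with hs0 | hs0 <;>
      rcases (by omega : t.val = 0 ∨ t.val = 1) with ht0 | ht0
    · rw [if_pos hs0, if_pos ht0] at he
      have := gInj i.val (by omega) j.val (by omega) he
      exact Prod.ext (Fin.ext this) (Fin.ext (show s.val = t.val by omega))
    · rw [if_pos hs0, if_neg (by omega)] at he
      exact absurd he (ghne i.val (by omega) j.val (by omega))
    · rw [if_neg (by omega), if_pos ht0] at he
      exact absurd he.symm (ghne j.val (by omega) i.val (by omega))
    · rw [if_neg (by omega), if_neg (by omega)] at he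
      have := hInj i.val (by omega) j.val (by omega) he
      exact Prod.ext (Fin.ext this) (Fin.ext (show s.val = t.val by omega))
  · rintro ⟨i, s⟩ ⟨j, t⟩ hadj2
    rw [oddPrism, boxProd_adj] at hadj2
    change G.Adj (if (s : ℕ) = 0 then g i.val else h i.val) (if (t : ℕ) = 0 then g j.val else h j.val)
    have hi := i.isLt; have hj := j.isLt
    have hs := s.isLt; have ht := t.isLt
    rcases hadj2 with ⟨hc0, hst0⟩ | ⟨hp0, hij0⟩
    · -- cycle step, s = t
      have hc : (cycleGraph (2 * k + 1)).Adj i j := hc0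
      have hst : s = t := hst0
      rcases cyc_adj hk hc with hcc | hcc | hcc | hcc <;>
        rcases (by omega : s.val = 0 ∨ s.val = 1) with hs0 | hs0 <;>
          rw [hst] at hs0 ⊢ <;>
            first
              | (rw [if_pos hs0, if_pos hs0])
              | (rw [if_neg (by omega), if_neg (by omega)])
      · exact (gadj j.val i.val (by omega) (by omega) hcc).symm
      · exact (hadj j.val i.val (by omega) (by omega) hcc).symm
      · exact gadj i.val j.val (by omega) (by omega) hcc
      · exact hadj i.val j.val (by omega) (by omega) hcc
      · have h1 : i.val = 0 := hcc.1
        have h2 : j.val = 2 * k := hcc.2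
        rw [h1, h2]; exact gwrap.symm
      · have h1 : i.val = 0 := hcc.1
        have h2 : j.val = 2 * k := hcc.2
        rw [h1, h2]; exact hwrap.symm
      · have h1 : j.val = 0 := hcc.1
        have h2 : i.val = 2 * k := hcc.2
        rw [h1, h2]; exact gwrap
      · have h1 : j.val = 0 := hcc.1
        have h2 : i.val = 2 * k := hcc.2
        rw [h1, h2]; exact hwrap
    · -- matching edge, i = j
      have hp : (pathGraph 2).Adj s t := hp0
      have hij : i = j := hij0
      rw [pathGraph_adj] at hp
      rw [hij]
      have hst : s.val = 0 ∧ t.val = 1 ∨ s.val = 1 ∧ t.val = 0 := by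
        rcases hp with hp | hp <;> omega
      rcases hst with ⟨h1, h2⟩ | ⟨h1, h2⟩
      · rw [if_pos h1, if_neg (by omega)]
        exact gmatch j.val (by omega)
      · rw [if_neg (by omega), if_pos h2]
        exact (gmatch j.val (by omega)).symm

/-- Let `k ≥ 1` and let `G` contain disjoint vertex sets `A`, `B`,
each of size at least `2k + 1`, completely joined to each other, and a vertex `y`
outside `A ∪ B` with at least `3` neighbors in each of `A` and `B`. If `G` has an
edge inside `A` or inside `B` one of whose endpoints is a neighbor of `y`, then `G`
contains a copy of `C_{2k+1} □ P_2`. -/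
theorem prism_from_edge_near_y {V : Type*} (k : ℕ) (hk : 1 ≤ k)
    (G : SimpleGraph V) (A B : Set V) (hAB : Disjoint A B)
    (hA : (2 * k + 1 : ℕ) ≤ A.encard) (hB : (2 * k + 1 : ℕ) ≤ B.encard)
    (hjoin : ∀ a ∈ A, ∀ b ∈ B, G.Adj a b)
    (y : V) (hy : y ∉ A ∪ B)
    (hyA : (3 : ℕ) ≤ {a ∈ A | G.Adj y a}.encard)
    (hyB : (3 : ℕ) ≤ {b ∈ B | G.Adj y b}.encard)
    (hedge : ∃ u v, ((u ∈ A ∧ v ∈ A) ∨ (u ∈ B ∧ v ∈ B)) ∧ G.Adj u v ∧ G.Adj y u) :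
    CopyIn (oddPrism k) G := by
  have hyA' : y ∉ A := fun h => hy (Or.inl h)
  have hyB' : y ∉ B := fun h => hy (Or.inr h)
  have hA2k : ((2 * k : ℕ) : ℕ∞) ≤ A.encard := le_trans (Nat.cast_le.mpr (by omega)) hA
  have hB2k : ((2 * k : ℕ) : ℕ∞) ≤ B.encard := le_trans (Nat.cast_le.mpr (by omega)) hB
  obtain ⟨u, v, hcase, huv, hyu⟩ := hedge
  rcases hcase with ⟨hu, hv⟩ | ⟨hu, hv⟩
  · obtain ⟨a', ha'mem, ha'u, ha'v⟩ := exists_mem_ne2 hyA u v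
    obtain ⟨b', hb'mem, -, -⟩ := exists_mem_ne2 hyB u v
    exact key_s8 k hk G A B hAB hA hB2k hjoin y hyA' hyB' u v hu hv huv hyu
      a' ha'mem.1 ha'u ha'v ha'mem.2 b' hb'mem.1 hb'mem.2
  · obtain ⟨a', ha'mem, ha'u, ha'v⟩ := exists_mem_ne2 hyB u v
    obtain ⟨b', hb'mem, -, -⟩ := exists_mem_ne2 hyA u v
    exact key_s8 k hk G B A hAB.symm hB hA2k (fun b hb a ha => (hjoin a ha b hb).symm)
      y hyB' hyA' u v hu hv huv hyu
      a' ha'mem.1 ha'u ha'v ha'mem.2 b' hb'mem.1 hb'mem.2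
end

section
/- Let k ≥ 1 and let G be a graph containing two disjoint vertex sets A and B with |A| ≥ 2k+1 and |B| ≥ 2k+1 such that every vertex of A is adjacent to every vertex of B. If G has an edge with both endpoints in A and also an edge with both endpoints in B, then G contains a subgraph isomorphic to C_{2k+1}□P_2. -/
/-!
Enumerate `A` as `a₀, …, a₂ₖ` and `B` as `b₀, …, b₂ₖ` so that `a₀a₂ₖ` and `b₀b₂ₖ` are the given
edges, and send the prism vertex `(i, j)` to `aᵢ` if `i + j` is even and to `bᵢ` otherwise. Every
edge of the prism joins vertices of different parity, hence lands on an `A`–`B` edge, except the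
two wrap-around edges `(0, j)(2k, j)` of the odd cycles, which land on the given edges.
-/

open SimpleGraph

theorem Set.exists_fin_embedding_of_le_encard {V : Type*} {s : Set V} {n : ℕ}
    (hn : n ≤ s.encard) {i j : Fin n} (hij : i ≠ j) {u v : V} (hu : u ∈ s) (hv : v ∈ s)
    (huv : u ≠ v) : ∃ f : Fin n ↪ V, (∀ x, f x ∈ s) ∧ f i = u ∧ f j = v := by
  classical
  have hpair : ({u, v} : Set V).encard ≤ n := by
    rw [Set.encard_pair huv]
    exact_mod_cast (show 2 ≤ n by have := i.isLt; have := j.isLt; omega)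
  obtain ⟨t, hut, hts, htn⟩ :=
    Set.exists_superset_subset_encard_eq (Set.pair_subset hu hv) hpair hn
  have : Finite t := (Set.finite_of_encard_eq_coe htn).to_subtype
  let e : Fin n ≃ t := (Finite.equivFinOfCardEq (by
    rw [Nat.card_coe_set_eq, Set.ncard_def, htn, ENat.toNat_natCast])).symm
  let u' : t := ⟨u, hut (by simp)⟩
  let v' : t := ⟨v, hut (by simp)⟩
  let σ := Equiv.swap (e i) u'
  let τ := Equiv.swap (σ (e j)) v'
  have hσj : σ (e j) ≠ u' := by
    rw [Ne, ← Equiv.swap_apply_left (e i) u', σ.injective.eq_iff, e.apply_eq_iff_eq]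
    exact hij.symm
  have hτu : τ u' = u' :=
    Equiv.swap_apply_of_ne_of_ne hσj.symm (fun h => huv (congrArg Subtype.val h))
  refine ⟨(e.trans (σ.trans τ)).toEmbedding.trans (Function.Embedding.subtype _),
    fun x => hts (Subtype.prop _), ?_, ?_⟩
  · simp [σ, hτu, u']
  · simp [τ, v']

theorem cycleGraph_adj_val {n : ℕ} {u v : Fin n} (h : (cycleGraph n).Adj u v) :
    u.val + 1 = v.val ∨ v.val + 1 = u.val ∨ (u.val = 0 ∧ v.val + 1 = n) ∨
      (v.val = 0 ∧ u.val + 1 = n) := by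
  rw [cycleGraph_adj'] at h
  rcases lt_trichotomy u v with huv | rfl | hvu
  · rw [Fin.sub_val_of_le huv.le, Fin.coe_sub_iff_lt.mpr huv] at h
    omega
  · simp [Fin.sub_val_of_le le_rfl] at h
  · rw [Fin.sub_val_of_le hvu.le, Fin.coe_sub_iff_lt.mpr hvu] at h
    omega

theorem oddPrism_adj_cases {k : ℕ} {p q : Fin (2 * k + 1) × Fin 2} (h : (oddPrism k).Adj p q) :
    (p.1.val + p.2.val) % 2 ≠ (q.1.val + q.2.val) % 2 ∨
      p.2 = q.2 ∧ s(p.1, q.1) = s(0, Fin.last (2 * k)) := by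
  rw [oddPrism, boxProd_adj, pathGraph_adj] at h
  rcases h with ⟨hcyc, h2⟩ | ⟨hpath, h1⟩
  · rw [h2]
    rcases cycleGraph_adj_val hcyc with h | h | h | h
    · omega
    · omega
    · exact Or.inr ⟨rfl, Sym2.eq_iff.mpr (Or.inl ⟨Fin.ext h.1, Fin.ext (by rw [Fin.val_last]; omega)⟩)⟩
    · exact Or.inr ⟨rfl, Sym2.eq_iff.mpr (Or.inr ⟨Fin.ext (by rw [Fin.val_last]; omega), Fin.ext h.1⟩)⟩
  · omega

theorem copyIn_oddPrism_of_join {V : Type*} {G : SimpleGraph V} {k : ℕ}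
    {a b : Fin (2 * k + 1) → V} (ha : Function.Injective a) (hb : Function.Injective b)
    (hab : ∀ i j, a i ≠ b j) (hjoin : ∀ i j, G.Adj (a i) (b j))
    (hwa : G.Adj (a 0) (a (Fin.last (2 * k)))) (hwb : G.Adj (b 0) (b (Fin.last (2 * k)))) :
    CopyIn (oddPrism k) G := by
  let F : Fin (2 * k + 1) × Fin 2 → V := fun p =>
    if (p.1.val + p.2.val) % 2 = 0 then a p.1 else b p.1
  have hF : Function.Injective F := by
    rintro ⟨i, s⟩ ⟨j, t⟩ hij
    have := s.isLt
    have := t.isLt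
    simp only [F] at hij
    split_ifs at hij with hi hj hj
    · cases ha hij
      exact Prod.ext rfl (Fin.ext (show s.val = t.val by omega))
    · exact absurd hij (hab _ _)
    · exact absurd hij.symm (hab _ _)
    · cases hb hij
      exact Prod.ext rfl (Fin.ext (show s.val = t.val by omega))
  refine ⟨⟨F, hF⟩, fun p q hpq => ?_⟩
  simp only [Function.Embedding.coeFn_mk, F]
  rcases oddPrism_adj_cases hpq with hpar | ⟨h2, hw⟩
  · split_ifs
    · omega
    · exact hjoin _ _
    · exact (hjoin _ _).symm
    · omega
  · obtain ⟨i, s⟩ := p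
    obtain ⟨j, t⟩ := q
    obtain rfl : s = t := h2
    rcases Sym2.eq_iff.mp hw with ⟨rfl, rfl⟩ | ⟨rfl, rfl⟩ <;>
      simp only [Fin.val_zero, Fin.val_last, zero_add] <;> split_ifs <;>
      first | exact hwa | exact hwa.symm | exact hwb | exact hwb.symm | omega

/-- Let `k ≥ 1` and let `G` contain disjoint vertex sets `A`, `B`,
each of size at least `2k + 1`, completely joined to each other. If `G` has an edge
inside `A` and an edge inside `B`, then `G` contains a copy of `C_{2k+1} □ P_2`. -/
theorem prism_from_two_edges {V : Type*} (k : ℕ) (hk : 1 ≤ k)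
    (G : SimpleGraph V) (A B : Set V) (hAB : Disjoint A B)
    (hA : (2 * k + 1 : ℕ) ≤ A.encard) (hB : (2 * k + 1 : ℕ) ≤ B.encard)
    (hjoin : ∀ a ∈ A, ∀ b ∈ B, G.Adj a b)
    (heA : ∃ u ∈ A, ∃ v ∈ A, G.Adj u v)
    (heB : ∃ u ∈ B, ∃ v ∈ B, G.Adj u v) :
    CopyIn (oddPrism k) G := by
  obtain ⟨u, hu, v, hv, huv⟩ := heA
  obtain ⟨u', hu', v', hv', huv'⟩ := heB
  have h0 : (0 : Fin (2 * k + 1)) ≠ Fin.last (2 * k) := by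
    rw [Ne, Fin.ext_iff, Fin.val_zero, Fin.val_last]
    omega
  obtain ⟨a, haA, rfl, rfl⟩ := Set.exists_fin_embedding_of_le_encard hA h0 hu hv huv.ne
  obtain ⟨b, hbB, rfl, rfl⟩ := Set.exists_fin_embedding_of_le_encard hB h0 hu' hv' huv'.ne
  exact copyIn_oddPrism_of_join a.injective b.injective
    (fun i j => hAB.ne_of_mem (haA i) (hbB j)) (fun i j => hjoin _ (haA i) _ (hbB j)) huv huv'
end

section
/- Let k ≥ 1. If G is a graph on n vertices whose vertex set is partitioned into sets A and B such that every vertex of A is adjacent to every vertex of B, B is an independent set, and the induced subgraph G[A] is P_4-free, then G is C_{2k+1}□P_2-free. Consequently, for all nonnegative integers n_a, n_b with n_a + n_b = n, ex(n, C_{2k+1}□P_2) ≥ n_a·n_b + ex(n_a, P_4). -/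
set_option linter.unusedVariables false
set_option linter.unreachableTactic false
set_option linter.unusedTactic false
set_option linter.unnecessarySeqFocus false

open SimpleGraph Finset

lemma prismAux_parity (k : ℕ) (x y : Fin (2*k+1) → Prop)
    (hv : ∀ i, x i ∨ y i)
    (hx : ∀ i, x i ∨ x (i+1))
    (hy : ∀ i, y i ∨ y (i+1))
    (h22 : ∀ i, ¬(x i ∧ y i ∧ x (i+1) ∧ y (i+1)))
    (hT2B : ∀ i, ¬(x (i-1) ∧ x i ∧ y i ∧ y (i+1)))
    (hB2T : ∀ i, ¬(y (i-1) ∧ y i ∧ x i ∧ x (i+1))) : False := by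
  classical
  set φ : Fin (2*k+1) → ZMod 2 :=
    fun i => if x i then (if y i then (if x (i-1) then 0 else 1) else 0) else 1 with hφ
  set c : Fin (2*k+1) → ZMod 2 := fun i => if x i ∧ y i then 1 else 0 with hc
  have step : ∀ i, φ (i+1) = φ i + 1 + c i + c (i+1) := by
    intro i
    have hsub : (i + 1) - 1 = i := add_sub_cancel_right i 1
    by_cases xi : x i <;> by_cases yi : y i <;>
      by_cases xi1 : x (i+1) <;> by_cases yi1 : y (i+1)
    · exact absurd ⟨xi, yi, xi1, yi1⟩ (h22 i)
    · -- 2 then T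
      have hxim : x (i-1) := (hv (i-1)).resolve_right (fun h => hB2T i ⟨h, yi, xi, xi1⟩)
      simp [hφ, hc, hsub, xi, yi, xi1, yi1, hxim] <;> decide
    · -- 2 then B
      have hxim : ¬ x (i-1) := fun h => hT2B i ⟨h, xi, yi, yi1⟩
      simp [hφ, hc, hsub, xi, yi, xi1, yi1, hxim] <;> decide
    · exact absurd (hv (i+1)) (by simp [xi1, yi1])
    · -- T then 2
      simp [hφ, hc, hsub, xi, yi, xi1, yi1] <;> decide
    · exact absurd (hy i) (by simp [yi, yi1])
    · -- T then B
      simp [hφ, hc, hsub, xi, yi, xi1, yi1] <;> decide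
    · exact absurd (hv (i+1)) (by simp [xi1, yi1])
    · -- B then 2
      simp [hφ, hc, hsub, xi, yi, xi1, yi1] <;> decide
    · -- B then T
      simp [hφ, hc, hsub, xi, yi, xi1, yi1] <;> decide
    · exact absurd (hx i) (by simp [xi, xi1])
    · exact absurd (hv (i+1)) (by simp [xi1, yi1])
    · exact absurd (hv i) (by simp [xi, yi])
    · exact absurd (hv i) (by simp [xi, yi])
    · exact absurd (hv i) (by simp [xi, yi])
    · exact absurd (hv i) (by simp [xi, yi])
  have hshift : ∀ g : Fin (2*k+1) → ZMod 2, ∑ i, g (i+1) = ∑ i, g i := by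
    intro g
    exact Fintype.sum_equiv (Equiv.addRight 1) _ _ (fun i => rfl)
  have h0 : (0 : ZMod 2) = ∑ i : Fin (2*k+1), (φ (i+1) - φ i) := by
    rw [Finset.sum_sub_distrib, hshift φ, sub_self]
  have h1 : ∑ i : Fin (2*k+1), (φ (i+1) - φ i)
      = ∑ i : Fin (2*k+1), (1 + c i + c (i+1)) := by
    refine Finset.sum_congr rfl fun i _ => ?_
    rw [step i]; ring
  rw [h1] at h0
  have h2 : ∑ i : Fin (2*k+1), ((1 : ZMod 2) + c i + c (i+1))
      = ((2*k+1 : ℕ) : ZMod 2) + (∑ i, c i + ∑ i, c (i+1)) := by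
    rw [Finset.sum_add_distrib, Finset.sum_add_distrib, Finset.sum_const, card_univ,
      Fintype.card_fin, nsmul_eq_mul, mul_one, add_assoc]
  rw [h2, hshift c, CharTwo.add_self_eq_zero, add_zero] at h0
  have : ((2*k+1 : ℕ) : ZMod 2) = 1 := by
    push_cast
    rw [show ((2:ZMod 2)) = 0 from rfl]
    ring
  rw [this] at h0
  exact one_ne_zero h0.symm

lemma p4_copy {V : Type*} {G : SimpleGraph V} {A : Set V}
    {v0 v1 v2 v3 : V}
    (h0 : v0 ∈ A) (h1 : v1 ∈ A) (h2 : v2 ∈ A) (h3 : v3 ∈ A)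
    (d02 : v0 ≠ v2) (d03 : v0 ≠ v3) (d13 : v1 ≠ v3)
    (a01 : G.Adj v0 v1) (a12 : G.Adj v1 v2) (a23 : G.Adj v2 v3) :
    CopyIn (pathGraph 4) (G.induce A) := by
  have d01 := a01.ne
  have d12 := a12.ne
  have d23 := a23.ne
  refine ⟨⟨![⟨v0, h0⟩, ⟨v1, h1⟩, ⟨v2, h2⟩, ⟨v3, h3⟩], ?_⟩, ?_⟩
  · intro p q h
    fin_cases p <;> fin_cases q <;> simp_all [Subtype.ext_iff] <;>
      first
        | rfl
        | exact absurd rfl d01 | exact absurd rfl d02 | exact absurd rfl d03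
        | exact absurd rfl d12 | exact absurd rfl d13 | exact absurd rfl d23
        | exact absurd rfl d01.symm | exact absurd rfl d02.symm
        | exact absurd rfl d03.symm | exact absurd rfl d12.symm
        | exact absurd rfl d13.symm | exact absurd rfl d23.symm
  · intro p q hpq
    rw [pathGraph_adj] at hpq
    fin_cases p <;> fin_cases q <;> simp_all [SimpleGraph.comap_adj] <;>
      first
        | exact a01 | exact a12 | exact a23
        | exact a01.symm | exact a12.symm | exact a23.symm

lemma part1 (k n : ℕ) (hk : 1 ≤ k) (G : SimpleGraph (Fin n)) (A B : Set (Fin n))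
    (hU : A ∪ B = Set.univ) (hD : Disjoint A B)
    (hAB : ∀ a ∈ A, ∀ b ∈ B, G.Adj a b)
    (hBB : ∀ b ∈ B, ∀ b' ∈ B, ¬ G.Adj b b')
    (hP4 : ¬ CopyIn (pathGraph 4) (G.induce A)) :
    ¬ CopyIn (oddPrism k) G := by
  rintro ⟨f, hf⟩
  have hone : (1 : Fin (2*k+1)).val = 1 := by
    rw [Fin.val_one']; exact Nat.mod_eq_of_lt (by omega)
  have hne1 : ∀ i : Fin (2*k+1), i + 1 ≠ i := by
    intro i h
    have : (1 : Fin (2*k+1)) = 0 := by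
      have := congrArg (· - i) h
      simpa [add_comm, add_sub_cancel_right, sub_self] using this
    rw [Fin.ext_iff, hone] at this
    simp at this
  have adjV : ∀ i : Fin (2*k+1), (oddPrism k).Adj (i, 0) (i, 1) := by
    intro i
    right
    refine ⟨?_, rfl⟩
    rw [pathGraph_adj]
    left; rfl
  have adjH : ∀ (i : Fin (2*k+1)) (j : Fin 2), (oddPrism k).Adj (i, j) (i+1, j) := by
    intro i j
    left
    refine ⟨?_, rfl⟩
    rw [cycleGraph_adj']
    right
    rw [add_sub_cancel_left, hone]
  set x : Fin (2*k+1) → Prop := fun i => f (i, 0) ∈ A with hxdef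
  set y : Fin (2*k+1) → Prop := fun i => f (i, 1) ∈ A with hydef
  have hmem : ∀ v, v ∉ A → v ∈ B := by
    intro v hv
    have : v ∈ A ∪ B := hU ▸ Set.mem_univ v
    exact this.resolve_left hv
  have hnoBB : ∀ u w : Fin (2*k+1) × Fin 2, (oddPrism k).Adj u w →
      (f u ∈ A ∨ f w ∈ A) := by
    intro u w h
    by_contra hc
    push_neg at hc
    exact hBB _ (hmem _ hc.1) _ (hmem _ hc.2) (hf _ _ h)
  have hv : ∀ i, x i ∨ y i := fun i => hnoBB _ _ (adjV i)
  have hx : ∀ i, x i ∨ x (i+1) := fun i => hnoBB _ _ (adjH i 0)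
  have hy : ∀ i, y i ∨ y (i+1) := fun i => hnoBB _ _ (adjH i 1)
  have fne : ∀ u w : Fin (2*k+1) × Fin 2, u ≠ w → f u ≠ f w :=
    fun u w h hc => h (f.injective hc)
  have h22 : ∀ i, ¬(x i ∧ y i ∧ x (i+1) ∧ y (i+1)) := by
    rintro i ⟨hxi, hyi, hxi1, hyi1⟩
    refine hP4 (p4_copy hyi hxi hxi1 hyi1 ?_ ?_ ?_
      (hf _ _ (adjV i).symm) (hf _ _ (adjH i 0)) (hf _ _ (adjV (i+1))))
    · exact fne _ _ (by simp)
    · exact fne _ _ (by simp [Ne.symm (hne1 i)])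
    · exact fne _ _ (by simp)
  have hsub1 : ∀ i : Fin (2*k+1), i - 1 + 1 = i := fun i => sub_add_cancel i 1
  have hT2B : ∀ i, ¬(x (i-1) ∧ x i ∧ y i ∧ y (i+1)) := by
    rintro i ⟨h0, h1, h2, h3⟩
    have a01 : G.Adj (f (i-1, 0)) (f (i, 0)) := by
      have := hf _ _ (adjH (i-1) 0)
      rwa [hsub1 i] at this
    refine hP4 (p4_copy h0 h1 h2 h3 ?_ ?_ ?_ a01 (hf _ _ (adjV i)) (hf _ _ (adjH i 1)))
    · exact fne _ _ (by simp)
    · exact fne _ _ (by simp)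
    · exact fne _ _ (by simp)
  have hB2T : ∀ i, ¬(y (i-1) ∧ y i ∧ x i ∧ x (i+1)) := by
    rintro i ⟨h0, h1, h2, h3⟩
    have a01 : G.Adj (f (i-1, 1)) (f (i, 1)) := by
      have := hf _ _ (adjH (i-1) 1)
      rwa [hsub1 i] at this
    refine hP4 (p4_copy h0 h1 h2 h3 ?_ ?_ ?_ a01 (hf _ _ (adjV i).symm) (hf _ _ (adjH i 0)))
    · exact fne _ _ (by simp)
    · exact fne _ _ (by simp)
    · exact fne _ _ (by simp)
  exact prismAux_parity k x y hv hx hy h22 hT2B hB2T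

/-- The join-type graph on a sum type. -/
def sumGraph {na nb : ℕ} (H0 : SimpleGraph (Fin na)) : SimpleGraph (Fin na ⊕ Fin nb) where
  Adj u v := match u, v with
    | Sum.inl a, Sum.inl a' => H0.Adj a a'
    | Sum.inl _, Sum.inr _ => True
    | Sum.inr _, Sum.inl _ => True
    | Sum.inr _, Sum.inr _ => False
  symm := by
    constructor
    rintro (a|b) (a'|b') h
    · exact h.symm
    · trivial
    · trivial
    · exact h
  loopless := by
    constructor
    rintro (a|b) h
    · exact H0.irrefl h
    · exact h
  
lemma exNum_bddAbove {α : Type*} (N : ℕ) (H : SimpleGraph α) :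
    BddAbove {m : ℕ | ∃ G : SimpleGraph (Fin N), ¬ CopyIn H G ∧ G.edgeSet.ncard = m} := by
  refine ⟨(Set.univ : Set (Sym2 (Fin N))).ncard, ?_⟩
  rintro m ⟨G, -, rfl⟩
  exact Set.ncard_le_ncard (Set.subset_univ _) Set.finite_univ

lemma exNum_mem (N : ℕ) {α : Type*} (H : SimpleGraph α) (hH : ¬ CopyIn H (⊥ : SimpleGraph (Fin N))) :
    ∃ G : SimpleGraph (Fin N), ¬ CopyIn H G ∧ G.edgeSet.ncard = exNum N H := by
  have hne : {m : ℕ | ∃ G : SimpleGraph (Fin N), ¬ CopyIn H G ∧ G.edgeSet.ncard = m}.Nonempty :=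
    ⟨0, ⊥, hH, by simp⟩
  have := Nat.sSup_mem hne (exNum_bddAbove N H)
  exact this

variable {na nb : ℕ} {H0 : SimpleGraph (Fin na)} {a a' : Fin na} {b b' : Fin nb}

@[simp] lemma sumGraph_adj_ll :
    (sumGraph (nb := nb) H0).Adj (Sum.inl a) (Sum.inl a') ↔ H0.Adj a a' := Iff.rfl

@[simp] lemma sumGraph_adj_lr :
    (sumGraph (nb := nb) H0).Adj (Sum.inl a) (Sum.inr b) := trivial

@[simp] lemma sumGraph_adj_rl :
    (sumGraph (nb := nb) H0).Adj (Sum.inr b) (Sum.inl a) := trivial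

@[simp] lemma sumGraph_adj_rr :
    ¬ (sumGraph (nb := nb) H0).Adj (Sum.inr b) (Sum.inr b') := fun h => h

lemma sumGraph_edgeSet (H0 : SimpleGraph (Fin na)) :
    (sumGraph (nb := nb) H0).edgeSet =
      (Sym2.map Sum.inl '' H0.edgeSet) ∪
      ((fun p : Fin na × Fin nb => s(Sum.inl p.1, Sum.inr p.2)) '' Set.univ) := by
  ext e
  refine Sym2.ind (fun u v => ?_) e
  rw [SimpleGraph.mem_edgeSet, Set.mem_union]
  constructor
  · intro h
    cases u with
    | inl a =>
      cases v with
      | inl a' => exact Or.inl ⟨s(a, a'), h, Sym2.map_pair_eq Sum.inl a a'⟩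
      | inr b => exact Or.inr ⟨(a, b), Set.mem_univ _, rfl⟩
    | inr b =>
      cases v with
      | inl a => exact Or.inr ⟨(a, b), Set.mem_univ _, Sym2.eq_swap⟩
      | inr b' => exact h.elim
  · rintro (⟨e', he', heq⟩ | ⟨⟨p, q⟩, -, heq⟩)
    · induction e' using Sym2.ind with
      | _ p q =>
        rw [Sym2.map_pair_eq, Sym2.eq_iff] at heq
        rcases heq with ⟨h1, h2⟩ | ⟨h1, h2⟩
        · rw [← h1, ← h2]; exact he'
        · rw [← h1, ← h2]
          exact ((SimpleGraph.mem_edgeSet H0).mp he').symm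
    · rw [Sym2.eq_iff] at heq
      rcases heq with ⟨h1, h2⟩ | ⟨h1, h2⟩ <;> rw [← h1, ← h2] <;> trivial

lemma sumGraph_ncard (H0 : SimpleGraph (Fin na)) :
    (sumGraph (nb := nb) H0).edgeSet.ncard = na * nb + H0.edgeSet.ncard := by
  have hinj2 : Function.Injective (fun p : Fin na × Fin nb => s(Sum.inl p.1, Sum.inr p.2)) := by
    intro p q h
    simp only [Sym2.eq_iff] at h
    rcases h with ⟨h1, h2⟩ | ⟨h1, h2⟩
    · exact Prod.ext (Sum.inl_injective h1) (Sum.inr_injective h2)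
    · exact absurd h1 (by simp)
  have hdisj : Disjoint (Sym2.map Sum.inl '' H0.edgeSet)
      ((fun p : Fin na × Fin nb => s(Sum.inl p.1, Sum.inr p.2)) '' Set.univ) := by
    rw [Set.disjoint_left]
    rintro e ⟨e', -, rfl⟩ ⟨⟨p, q⟩, -, heq⟩
    induction e' using Sym2.ind with
    | _ a b =>
      rw [Sym2.map_pair_eq, Sym2.eq_iff] at heq
      rcases heq with ⟨h1, h2⟩ | ⟨h1, h2⟩ <;> simp_all
  rw [sumGraph_edgeSet, Set.ncard_union_eq hdisj (Set.toFinite _) (Set.toFinite _),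
    Set.ncard_image_of_injective _ (Sym2.map.injective Sum.inl_injective),
    Set.ncard_image_of_injective _ hinj2, Set.ncard_univ, Nat.card_eq_fintype_card,
    Fintype.card_prod, Fintype.card_fin, Fintype.card_fin, add_comm]

lemma part2 (k n : ℕ) (hk : 1 ≤ k) (na nb : ℕ) (hnab : na + nb = n) :
    na * nb + exNum na (pathGraph 4) ≤ exNum n (oddPrism k) := by
  -- a P4-free maximizer on Fin na
  obtain ⟨H0, hH0free, hH0card⟩ := exNum_mem na (pathGraph 4) (by
    rintro ⟨f, hf⟩
    exact (hf 0 1 (by rw [pathGraph_adj]; exact Or.inl rfl)).elim)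
  set e : (Fin na ⊕ Fin nb) ≃ Fin n := finSumFinEquiv.trans (finCongr hnab) with he
  set G : SimpleGraph (Fin n) := (sumGraph (nb := nb) H0).comap ⇑e.symm with hG
  have hiso : sumGraph (nb := nb) H0 ≃g G := ⟨e, by intro u v; simp [hG]⟩
  have hcard : G.edgeSet.ncard = na * nb + exNum na (pathGraph 4) := by
    rw [← hH0card, ← sumGraph_ncard (nb := nb) H0]
    rw [← Nat.card_coe_set_eq, ← Nat.card_coe_set_eq]
    exact (Nat.card_congr hiso.mapEdgeSet).symm
  set A : Set (Fin n) := {v | ∃ a, e.symm v = Sum.inl a} with hA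
  set B : Set (Fin n) := {v | ∃ b, e.symm v = Sum.inr b} with hB
  have hfree : ¬ CopyIn (oddPrism k) G := by
    refine part1 k n hk G A B ?_ ?_ ?_ ?_ ?_
    · ext v
      simp only [Set.mem_union, Set.mem_univ, iff_true, hA, hB, Set.mem_setOf_eq]
      cases h : e.symm v with
      | inl a => exact Or.inl ⟨a, rfl⟩
      | inr b => exact Or.inr ⟨b, rfl⟩
    · rw [Set.disjoint_left]
      rintro v ⟨a, ha⟩ ⟨b, hb⟩
      rw [ha] at hb
      exact Sum.inl_ne_inr hb
    · rintro v ⟨a, ha⟩ w ⟨b, hb⟩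
      show (sumGraph H0).Adj (e.symm v) (e.symm w)
      rw [ha, hb]
      trivial
    · rintro v ⟨b, hb⟩ w ⟨b', hb'⟩ hadj
      have : (sumGraph (nb := nb) H0).Adj (e.symm v) (e.symm w) := hadj
      rw [hb, hb'] at this
      exact this
    · rintro ⟨g, hg⟩
      apply hH0free
      have hex : ∀ j : Fin 4, ∃ a : Fin na, e.symm ((g j) : Fin n) = Sum.inl a :=
        fun j => (g j).2
      choose ga hga using hex
      refine ⟨⟨ga, ?_⟩, ?_⟩
      · intro p q h
        apply g.injective
        apply Subtype.ext
        apply e.symm.injective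
        rw [hga, hga, h]
      · intro p q hpq
        have := hg p q hpq
        have h2 : (sumGraph (nb := nb) H0).Adj (e.symm (g p : Fin n)) (e.symm (g q : Fin n)) :=
          this
        rw [hga, hga] at h2
        exact h2
  have hmem : na * nb + exNum na (pathGraph 4) ∈
      {m : ℕ | ∃ G : SimpleGraph (Fin n), ¬ CopyIn (oddPrism k) G ∧ G.edgeSet.ncard = m} :=
    ⟨G, hfree, hcard⟩
  exact le_csSup (exNum_bddAbove n (oddPrism k)) hmem

/-- If the vertex set of `G` is partitioned into `A` and `B` with
every vertex of `A` adjacent to every vertex of `B`, `B` independent, and `G[A]`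
`P_4`-free, then `G` is `C_{2k+1}□P_2`-free; consequently
`ex(n, C_{2k+1}□P_2) ≥ n_a n_b + ex(n_a, P_4)` whenever `n_a + n_b = n`. -/
theorem prism_free_construction (k n : ℕ) (hk : 1 ≤ k) :
    (∀ (G : SimpleGraph (Fin n)) (A B : Set (Fin n)),
      A ∪ B = Set.univ → Disjoint A B →
      (∀ a ∈ A, ∀ b ∈ B, G.Adj a b) →
      (∀ b ∈ B, ∀ b' ∈ B, ¬ G.Adj b b') →
      ¬ CopyIn (pathGraph 4) (G.induce A) →
      ¬ CopyIn (oddPrism k) G) ∧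
    ∀ na nb : ℕ, na + nb = n →
      na * nb + exNum na (pathGraph 4) ≤ exNum n (oddPrism k) := by
  constructor
  · intro G A B h1 h2 h3 h4 h5
    exact part1 k n hk G A B h1 h2 h3 h4 h5
  · intro na nb h
    exact part2 k n hk na nb h
end

section
/- Let G be a C_3□P_2-free graph and let v_1,...,v_6 be six distinct vertices of G such that v_i and v_j are adjacent whenever 1 ≤ |i−j| ≤ 2 (a copy of P_6^2). Then every vertex v of G outside {v_1,...,v_6} has at most 4 neighbors in {v_1,...,v_6}; moreover, if v has exactly 4 neighbors there, then its neighbor set in {v_1,...,v_6} is one of the six sets {v_1,v_2,v_3,v_4}, {v_3,v_4,v_5,v_6}, {v_2,v_3,v_4,v_5}, {v_1,v_3,v_4,v_6}, {v_1,v_3,v_5,v_6}, {v_1,v_2,v_4,v_6}. -/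
open SimpleGraph

/-- `P_6^2`, the square of the path on six vertices: `i` and `j` are adjacent
iff `1 ≤ |i - j| ≤ 2`. -/
def pathSq6 : SimpleGraph (Fin 6) :=
  SimpleGraph.fromRel (fun i j => (i : ℕ) < (j : ℕ) ∧ (j : ℕ) ≤ (i : ℕ) + 2)

/-!
If `w` is adjacent to `v c`, `v d`, `v e`, where `a b c` is a triangle of `P_6²` and `d e` an edge
with `a ~ d` and `b ~ e`, then the triangles `v a, v b, v c` and `v d, v e, w` with the matching
`v a v d`, `v b v e`, `v c w` form a `C_3□P_2`. Up to the symmetry `i ↦ 5 - i`, the only triples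
`{c, d, e}` arising this way are `{0, 1, 4}` and `{0, 3, 4}`, and a finite check shows that every
subset of `Fin 6` containing none of the four triples has at most four elements, with equality only
for the six listed sets.
-/

theorem oddPrism_one_adj {p q : Fin 3 × Fin 2} :
    (oddPrism 1).Adj p q ↔ p ≠ q ∧ (p.1 = q.1 ∨ p.2 = q.2) := by
  rcases p with ⟨i, s⟩
  rcases q with ⟨j, t⟩
  simp only [oddPrism, boxProd_adj, cycleGraph_adj, pathGraph_adj]
  revert i s j t
  decide

theorem copyIn_oddPrism_one_of_triangles {V : Type*} {G : SimpleGraph V} {a b c a' b' c' : V}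
    (hnd : [a, b, c, a', b', c'].Nodup)
    (hab : G.Adj a b) (hac : G.Adj a c) (hbc : G.Adj b c)
    (ha'b' : G.Adj a' b') (ha'c' : G.Adj a' c') (hb'c' : G.Adj b' c')
    (haa' : G.Adj a a') (hbb' : G.Adj b b') (hcc' : G.Adj c c') :
    CopyIn (oddPrism 1) G := by
  refine ⟨⟨fun p => ![![a, a'], ![b, b'], ![c, c']] p.1 p.2, ?_⟩, ?_⟩
  · simp only [List.nodup_cons, List.mem_cons, List.not_mem_nil, List.nodup_nil, or_false,
      not_or] at hnd
    intro p q
    fin_cases p <;> fin_cases q <;> simp_all [eq_comm]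
  · intro p q h
    rw [oddPrism_one_adj] at h
    fin_cases p <;> fin_cases q <;> simp_all [G.adj_comm]

instance : DecidableRel pathSq6.Adj := fun i j => decidable_of_iff' _ (fromRel_adj _ i j)

def pathSq6PrismTriples : Finset (Finset (Fin 6)) :=
  {{0, 1, 4}, {0, 3, 4}, {1, 2, 5}, {1, 4, 5}}

set_option maxRecDepth 10000 in
theorem card_le_four_of_forall_not_subset (S : Finset (Fin 6))
    (hS : ∀ T ∈ pathSq6PrismTriples, ¬ T ⊆ S) :
    S.card ≤ 4 ∧ (S.card = 4 → S ∈ ({{0, 1, 2, 3}, {2, 3, 4, 5}, {1, 2, 3, 4},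
      {0, 2, 3, 5}, {0, 2, 4, 5}, {0, 1, 3, 5}} : Finset (Finset (Fin 6)))) := by
  revert S
  decide

section P6SquareCopy

variable {V : Type*} {G : SimpleGraph V} {v : Fin 6 ↪ V} {w : V}

theorem copyIn_oddPrism_one_of_common_neighbor
    (hv : ∀ i j, pathSq6.Adj i j → G.Adj (v i) (v j)) (hw : w ∉ Set.range v)
    {a b c d e : Fin 6} (hnd : [a, b, c, d, e].Nodup)
    (hab : pathSq6.Adj a b) (hac : pathSq6.Adj a c) (hbc : pathSq6.Adj b c)
    (hde : pathSq6.Adj d e) (had : pathSq6.Adj a d) (hbe : pathSq6.Adj b e)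
    (hc : G.Adj w (v c)) (hd : G.Adj w (v d)) (he : G.Adj w (v e)) :
    CopyIn (oddPrism 1) G := by
  have hnd' : ([a, b, c, d, e].map v ++ [w]).Nodup :=
    List.nodup_append.2 ⟨hnd.map v.injective, List.nodup_singleton w, fun x hx y hy => by
      rw [List.mem_singleton] at hy
      obtain ⟨i, -, rfl⟩ := List.mem_map.1 hx
      exact fun h => hw ⟨i, h.trans hy⟩⟩
  exact copyIn_oddPrism_one_of_triangles hnd' (hv _ _ hab) (hv _ _ hac) (hv _ _ hbc)
    (hv _ _ hde) hd.symm he.symm (hv _ _ had) (hv _ _ hbe) hc.symm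

theorem not_subset_of_mem_pathSq6PrismTriples (hfree : ¬ CopyIn (oddPrism 1) G)
    (hv : ∀ i j, pathSq6.Adj i j → G.Adj (v i) (v j)) (hw : w ∉ Set.range v)
    {T : Finset (Fin 6)} (hT : T ∈ pathSq6PrismTriples) :
    ¬ (T : Set (Fin 6)) ⊆ {i | G.Adj w (v i)} := by
  intro hsub
  have hadj : ∀ i ∈ T, G.Adj w (v i) := fun i hi => hsub hi
  apply hfree
  simp only [pathSq6PrismTriples, Finset.mem_insert, Finset.mem_singleton] at hT
  rcases hT with rfl | rfl | rfl | rfl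
  · refine copyIn_oddPrism_one_of_common_neighbor
      (a := 2) (b := 3) (c := 4) (d := 0) (e := 1) hv hw
      ?_ ?_ ?_ ?_ ?_ ?_ ?_ (hadj _ ?_) (hadj _ ?_) (hadj _ ?_) <;> decide
  · refine copyIn_oddPrism_one_of_common_neighbor
      (a := 1) (b := 2) (c := 0) (d := 3) (e := 4) hv hw
      ?_ ?_ ?_ ?_ ?_ ?_ ?_ (hadj _ ?_) (hadj _ ?_) (hadj _ ?_) <;> decide
  · refine copyIn_oddPrism_one_of_common_neighbor
      (a := 3) (b := 4) (c := 5) (d := 1) (e := 2) hv hw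
      ?_ ?_ ?_ ?_ ?_ ?_ ?_ (hadj _ ?_) (hadj _ ?_) (hadj _ ?_) <;> decide
  · refine copyIn_oddPrism_one_of_common_neighbor
      (a := 2) (b := 3) (c := 1) (d := 4) (e := 5) hv hw
      ?_ ?_ ?_ ?_ ?_ ?_ ?_ (hadj _ ?_) (hadj _ ?_) (hadj _ ?_) <;> decide

end P6SquareCopy

/-- Let `G` be `C_3□P_2`-free and let `v : Fin 6 ↪ V` be a copy of
`P_6²` in `G`. Every vertex outside the copy has at most `4` neighbors among
`v_1, …, v_6`, and if it has exactly `4`, its neighbor set there is one of six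
listed sets. -/
theorem neighbors_of_P6sq_copy {V : Type*} (G : SimpleGraph V)
    (hfree : ¬ CopyIn (oddPrism 1) G)
    (v : Fin 6 ↪ V) (hv : ∀ i j, pathSq6.Adj i j → G.Adj (v i) (v j)) :
    ∀ w, w ∉ Set.range v →
      {i : Fin 6 | G.Adj w (v i)}.ncard ≤ 4 ∧
      ({i : Fin 6 | G.Adj w (v i)}.ncard = 4 →
        {i : Fin 6 | G.Adj w (v i)} ∈
          ({{0, 1, 2, 3}, {2, 3, 4, 5}, {1, 2, 3, 4},
            {0, 2, 3, 5}, {0, 2, 4, 5}, {0, 1, 3, 5}} : Set (Set (Fin 6)))) := by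
  intro w hw
  obtain ⟨S, hS⟩ := (Set.toFinite {i : Fin 6 | G.Adj w (v i)}).exists_finset_coe
  rw [← hS, Set.ncard_coe_finset]
  obtain ⟨hle, hquad⟩ := card_le_four_of_forall_not_subset S fun T hT hTS =>
    not_subset_of_mem_pathSq6PrismTriples hfree hv hw hT (hS ▸ Finset.coe_subset.2 hTS)
  refine ⟨hle, fun h4 => ?_⟩
  simp only [Finset.mem_insert, Finset.mem_singleton] at hquad
  rcases hquad h4 with rfl | rfl | rfl | rfl | rfl | rfl <;> simp
end
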